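/- arXiv:1204.4085 — 7 statements merged into one kernel-verified Lean document; each statement's English description precedes it below -/
import Mathlib

section
/- For positive real-variable complex numbers z1, z2, z3 with |z_i| < 1 and positive integers k1, k2, k3, the product Li_{k1,k2}(z1,z2) · Li_{k3}(z3) of a double polylogarithm and a single polylogarithm equals Li_{k1,k2,k3}(z1,z2,z2·z3) + Li_{k1,k3,k2}(z1,z1·z3,z2·z3) + Li_{k3,k1,k2}(z3,z1·z3,z2·z3) + Li_{k1+k3,k2}(z1·z3,z2·z3) + Li_{k1,k2+k3}(z1,z2·z3), where Li_{l1,...,ln}(z1,...,zn) = Σ_{m1>m2>...>mn>0} z1^{m1-m2}···z_{n-1}^{m_{n-1}-m_n} z_n^{m_n} / (m1^{l1}···mn^{ln}). -/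
open Function

lemma auxPL_single {z : ℂ} (hz : ‖z‖ < 1) (k : ℕ) :
    Summable (fun m : ℕ => ‖(if 0 < m then z ^ m / (m : ℂ) ^ k else 0)‖) := by
  apply Summable.of_nonneg_of_le (fun _ => norm_nonneg _) (fun m => ?_)
    (summable_geometric_of_lt_one (norm_nonneg z) hz)
  split_ifs with h
  · rw [norm_div, norm_pow, norm_pow, Complex.norm_natCast]
    apply div_le_self (pow_nonneg (norm_nonneg z) m)
    exact one_le_pow₀ (by exact_mod_cast h)
  · simpa using pow_nonneg (norm_nonneg z) m

lemma auxPL_double {z1 z2 : ℂ} (hz1 : ‖z1‖ < 1) (hz2 : ‖z2‖ < 1) (k1 k2 : ℕ) :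
    Summable (fun p : ℕ × ℕ => ‖(if p.2 < p.1 ∧ 0 < p.2 then
      z1 ^ (p.1 - p.2) * z2 ^ p.2 / ((p.1 : ℂ) ^ k1 * (p.2 : ℂ) ^ k2) else 0)‖) := by
  set f : ℕ × ℕ → ℝ := fun p => ‖(if p.2 < p.1 ∧ 0 < p.2 then
      z1 ^ (p.1 - p.2) * z2 ^ p.2 / ((p.1 : ℂ) ^ k1 * (p.2 : ℂ) ^ k2) else 0)‖ with hfdef
  set i : ℕ × ℕ → ℕ × ℕ := fun q => (q.1 + q.2 + 1, q.2) with hidef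
  have hinj : Injective i := by
    rintro ⟨a, b⟩ ⟨c, d⟩ h
    simp only [hidef, Prod.mk.injEq] at h
    obtain ⟨h1, h2⟩ := h
    simp only [Prod.mk.injEq]
    omega
  have hsupp : support f ⊆ Set.range i := by
    rintro ⟨m1, m2⟩ hm
    by_cases h : m2 < m1
    · exact ⟨(m1 - m2 - 1, m2), by simp only [hidef]; ext <;> simp <;> omega⟩
    · exfalso; apply hm; simp [hfdef, h]
  rw [← hinj.summable_iff ?_]
  · apply Summable.of_nonneg_of_le (fun _ => norm_nonneg _) (fun q => ?_)
      ((summable_geometric_of_lt_one (norm_nonneg z1) hz1).mul_of_nonneg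
        (summable_geometric_of_lt_one (norm_nonneg z2) hz2)
        (fun n => pow_nonneg (norm_nonneg z1) n) (fun n => pow_nonneg (norm_nonneg z2) n))
    obtain ⟨a, b⟩ := q
    simp only [hfdef, hidef, comp_apply]
    split_ifs with h
    · rw [norm_div, norm_mul, norm_mul, norm_pow, norm_pow, norm_pow, norm_pow,
        Complex.norm_natCast, Complex.norm_natCast]
      have h1 : a + b + 1 - b = a + 1 := by omega
      rw [h1]
      have hden : (1:ℝ) ≤ ((a + b + 1 : ℕ):ℝ) ^ k1 * ((b:ℕ):ℝ) ^ k2 := by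
        have := h.2
        apply one_le_mul_of_one_le_of_one_le <;>
          exact one_le_pow₀ (by exact_mod_cast by omega)
      calc ‖z1‖ ^ (a + 1) * ‖z2‖ ^ b / (((a + b + 1 : ℕ):ℝ) ^ k1 * ((b:ℕ):ℝ) ^ k2)
          ≤ ‖z1‖ ^ (a + 1) * ‖z2‖ ^ b := div_le_self
            (mul_nonneg (pow_nonneg (norm_nonneg z1) _) (pow_nonneg (norm_nonneg z2) _)) hden
        _ ≤ ‖z1‖ ^ a * ‖z2‖ ^ b := by
            apply mul_le_mul_of_nonneg_right _ (pow_nonneg (norm_nonneg z2) b)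
            exact pow_le_pow_of_le_one (norm_nonneg z1) hz1.le (by omega)
    · simpa using mul_nonneg (pow_nonneg (norm_nonneg z1) a) (pow_nonneg (norm_nonneg z2) b)
  · intro p hp
    by_contra h
    exact hp (hsupp h)

/-- single polylogarithm -/
noncomputable def Li (k : ℕ) (z : ℂ) : ℂ :=
  ∑' m : ℕ, if 0 < m then z ^ m / (m : ℂ) ^ k else 0

/-- double polylogarithm -/
noncomputable def Li2 (k1 k2 : ℕ) (z1 z2 : ℂ) : ℂ :=
  ∑' p : ℕ × ℕ, if p.2 < p.1 ∧ 0 < p.2 then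
    z1 ^ (p.1 - p.2) * z2 ^ p.2 / ((p.1 : ℂ) ^ k1 * (p.2 : ℂ) ^ k2) else 0

/-- triple polylogarithm -/
noncomputable def Li3 (k1 k2 k3 : ℕ) (z1 z2 z3 : ℂ) : ℂ :=
  ∑' t : ℕ × ℕ × ℕ, if t.2.1 < t.1 ∧ t.2.2 < t.2.1 ∧ 0 < t.2.2 then
    z1 ^ (t.1 - t.2.1) * z2 ^ (t.2.1 - t.2.2) * z3 ^ t.2.2 /
      ((t.1 : ℂ) ^ k1 * (t.2.1 : ℂ) ^ k2 * (t.2.2 : ℂ) ^ k3) else 0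

theorem double_times_single_polylog (z1 z2 z3 : ℂ)
    (hz1 : ‖z1‖ < 1) (hz2 : ‖z2‖ < 1) (hz3 : ‖z3‖ < 1)
    (k1 k2 k3 : ℕ) (hk1 : 0 < k1) (hk2 : 0 < k2) (hk3 : 0 < k3) :
    Li2 k1 k2 z1 z2 * Li k3 z3 =
      Li3 k1 k2 k3 z1 z2 (z2 * z3) + Li3 k1 k3 k2 z1 (z1 * z3) (z2 * z3) +
      Li3 k3 k1 k2 z3 (z1 * z3) (z2 * z3) +
      Li2 (k1 + k3) k2 (z1 * z3) (z2 * z3) + Li2 k1 (k2 + k3) z1 (z2 * z3) := by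
  classical
  set f : ℕ × ℕ → ℂ := fun p => if p.2 < p.1 ∧ 0 < p.2 then
    z1 ^ (p.1 - p.2) * z2 ^ p.2 / ((p.1 : ℂ) ^ k1 * (p.2 : ℂ) ^ k2) else 0 with hfdef
  set g : ℕ → ℂ := fun m => if 0 < m then z3 ^ m / (m : ℂ) ^ k3 else 0 with hgdef
  have hfs : Summable (fun p => ‖f p‖) := auxPL_double hz1 hz2 k1 k2
  have hgs : Summable (fun m => ‖g m‖) := auxPL_single hz3 k3
  have hFn : Summable (fun x : (ℕ × ℕ) × ℕ => ‖f x.1 * g x.2‖) := hfs.mul_norm hgs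
  set F : ℕ × ℕ × ℕ → ℂ := fun t => if t.2.1 < t.1 ∧ 0 < t.2.1 ∧ 0 < t.2.2 then
    z1 ^ (t.1 - t.2.1) * z2 ^ t.2.1 * z3 ^ t.2.2 /
      ((t.1 : ℂ) ^ k1 * (t.2.1 : ℂ) ^ k2 * (t.2.2 : ℂ) ^ k3) else 0 with hFdef
  have hFeq : ∀ t : ℕ × ℕ × ℕ, f (t.1, t.2.1) * g t.2.2 = F t := by
    rintro ⟨m1, m2, m3⟩
    simp only [hfdef, hgdef, hFdef]
    split_ifs with h1 h2 h3 <;> first | (exfalso; omega) | ring1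
  -- Step 1: product as a triple sum
  have hprod : Li2 k1 k2 z1 z2 * Li k3 z3 = ∑' t : ℕ × ℕ × ℕ, F t := by
    rw [Li2, Li, ← hfdef, ← hgdef, tsum_mul_tsum_of_summable_norm hfs hgs,
      ← Equiv.tsum_eq (Equiv.prodAssoc ℕ ℕ ℕ) F]
    exact tsum_congr fun x => hFeq (x.1.1, x.1.2, x.2)
  have hFns : Summable (fun t : ℕ × ℕ × ℕ => ‖F t‖) := by
    rw [← Equiv.summable_iff (Equiv.prodAssoc ℕ ℕ ℕ)]
    exact hFn.congr fun x => by
      simp only [comp_apply]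
      exact congrArg norm (hFeq (x.1.1, x.1.2, x.2))
  -- the five pieces
  set F1 : ℕ × ℕ × ℕ → ℂ := fun t => if t.2.2 < t.2.1 then F t else 0 with hF1
  set F2 : ℕ × ℕ × ℕ → ℂ := fun t => if t.2.1 < t.2.2 ∧ t.2.2 < t.1 then F t else 0 with hF2
  set F3 : ℕ × ℕ × ℕ → ℂ := fun t => if t.1 < t.2.2 then F t else 0 with hF3
  set F4 : ℕ × ℕ × ℕ → ℂ := fun t => if t.2.2 = t.1 then F t else 0 with hF4
  set F5 : ℕ × ℕ × ℕ → ℂ := fun t => if t.2.2 = t.2.1 then F t else 0 with hF5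
  have hbnd : ∀ (c : ℕ × ℕ × ℕ → Prop) [DecidablePred c],
      Summable (fun t => if c t then F t else 0) := by
    intro c _
    apply hFns.of_norm_bounded
    intro t
    split_ifs
    · exact le_refl _
    · simpa using norm_nonneg (F t)
  have hs1 : Summable F1 := hbnd _
  have hs2 : Summable F2 := hbnd _
  have hs3 : Summable F3 := hbnd _
  have hs4 : Summable F4 := hbnd _
  have hs5 : Summable F5 := hbnd _
  have hsplit : ∀ t : ℕ × ℕ × ℕ, F t = F1 t + F2 t + F3 t + F4 t + F5 t := by
    rintro ⟨m1, m2, m3⟩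
    simp only [hF1, hF2, hF3, hF4, hF5]
    by_cases hb : m2 < m1 ∧ 0 < m2 ∧ 0 < m3
    · split_ifs <;> first | (exfalso; omega) | ring1
    · have h0 : F (m1, m2, m3) = 0 := by simp only [hFdef]; rw [if_neg hb]
      rw [h0]
      split_ifs <;> ring
  have htsum5 : ∑' t, F t = ∑' t, F1 t + ∑' t, F2 t + ∑' t, F3 t + ∑' t, F4 t + ∑' t, F5 t := by
    rw [tsum_congr hsplit, Summable.tsum_add (((hs1.add hs2).add hs3).add hs4) hs5,
      Summable.tsum_add ((hs1.add hs2).add hs3) hs4, Summable.tsum_add (hs1.add hs2) hs3, Summable.tsum_add hs1 hs2]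
  -- identify the five pieces
  have e1 : ∑' t, F1 t = Li3 k1 k2 k3 z1 z2 (z2 * z3) := by
    rw [Li3]
    apply tsum_congr
    rintro ⟨m1, m2, m3⟩
    simp only [hF1, hFdef]
    split_ifs with h1 h2 h3 <;> first | rfl | (exfalso; omega) | skip
    obtain ⟨b, rfl⟩ : ∃ b, m2 = b + m3 := ⟨m2 - m3, by omega⟩
    simp only [Nat.add_sub_cancel, pow_add, mul_pow]
    ring1
  have e2 : ∑' t, F2 t = Li3 k1 k3 k2 z1 (z1 * z3) (z2 * z3) := by
    rw [Li3]
    conv_rhs => rw [← Equiv.tsum_eq ((Equiv.refl ℕ).prodCongr (Equiv.prodComm ℕ ℕ))]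
    apply tsum_congr
    rintro ⟨m1, m2, m3⟩
    simp only [hF2, hFdef, Equiv.prodCongr_apply, Equiv.coe_refl, Prod.map_apply, id_eq,
      Equiv.prodComm_apply, Prod.swap_prod_mk]
    split_ifs with h1 h2 h3 <;> first | rfl | (exfalso; omega) | skip
    obtain ⟨c, rfl⟩ : ∃ c, m3 = c + m2 := ⟨m3 - m2, by omega⟩
    obtain ⟨d, rfl⟩ : ∃ d, m1 = d + (c + m2) := ⟨m1 - (c + m2), by omega⟩
    have ha : d + (c + m2) - m2 = d + c := by omega
    rw [ha]
    simp only [Nat.add_sub_cancel, pow_add, mul_pow]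
    ring1
  have e3 : ∑' t, F3 t = Li3 k3 k1 k2 z3 (z1 * z3) (z2 * z3) := by
    rw [Li3]
    conv_rhs => rw [← Equiv.tsum_eq
      (⟨fun t => (t.2.2, t.1, t.2.1), fun t => (t.2.1, t.2.2, t.1),
        fun t => rfl, fun t => rfl⟩ : (ℕ × ℕ × ℕ) ≃ (ℕ × ℕ × ℕ))]
    apply tsum_congr
    rintro ⟨m1, m2, m3⟩
    simp only [hF3, hFdef, Equiv.coe_fn_mk]
    split_ifs with h1 h2 h3 <;> first | rfl | (exfalso; omega) | skip
    obtain ⟨c, rfl⟩ : ∃ c, m1 = c + m2 := ⟨m1 - m2, by omega⟩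
    obtain ⟨d, rfl⟩ : ∃ d, m3 = d + (c + m2) := ⟨m3 - (c + m2), by omega⟩
    simp only [Nat.add_sub_cancel, pow_add, mul_pow]
    ring1
  have e4 : ∑' t, F4 t = Li2 (k1 + k3) k2 (z1 * z3) (z2 * z3) := by
    rw [Li2]
    have hinj : Injective (fun p : ℕ × ℕ => (p.1, p.2, p.1)) := by
      rintro ⟨a, b⟩ ⟨c, d⟩ h
      simp only [Prod.mk.injEq] at h
      simp only [Prod.mk.injEq]
      omega
    have hsupp : support F4 ⊆ Set.range (fun p : ℕ × ℕ => (p.1, p.2, p.1)) := by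
      rintro ⟨m1, m2, m3⟩ hm
      have h31 : m3 = m1 := by
        by_contra hne
        exact hm (by simp only [hF4]; exact if_neg hne)
      exact ⟨(m1, m2), by rw [h31]⟩
    rw [← hinj.tsum_eq hsupp]
    apply tsum_congr
    rintro ⟨m1, m2⟩
    simp only [hF4, hFdef, if_pos rfl]
    split_ifs with h1 h2 <;> first | rfl | (exfalso; omega) | skip
    obtain ⟨c, rfl⟩ : ∃ c, m1 = c + m2 := ⟨m1 - m2, by omega⟩
    simp only [Nat.add_sub_cancel, pow_add, mul_pow]
    ring1
  have e5 : ∑' t, F5 t = Li2 k1 (k2 + k3) z1 (z2 * z3) := by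
    rw [Li2]
    have hinj : Injective (fun p : ℕ × ℕ => (p.1, p.2, p.2)) := by
      rintro ⟨a, b⟩ ⟨c, d⟩ h
      simp only [Prod.mk.injEq] at h
      simp only [Prod.mk.injEq]
      omega
    have hsupp : support F5 ⊆ Set.range (fun p : ℕ × ℕ => (p.1, p.2, p.2)) := by
      rintro ⟨m1, m2, m3⟩ hm
      have h32 : m3 = m2 := by
        by_contra hne
        exact hm (by simp only [hF5]; exact if_neg hne)
      exact ⟨(m1, m2), by rw [h32]⟩
    rw [← hinj.tsum_eq hsupp]
    apply tsum_congr
    rintro ⟨m1, m2⟩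
    simp only [hF5, hFdef, if_pos rfl]
    split_ifs with h1 h2 <;> first | rfl | (exfalso; omega) | skip
    simp only [pow_add, mul_pow]
    ring1
  rw [hprod, htsum5, e1, e2, e3, e4, e5]
end

section
/- For complex numbers z1, z2, z3 with |z_i| < 1 and positive integers k1, k2, k3, the product Li_{k1}(z1)·Li_{k2}(z2)·Li_{k3}(z3) equals Σ_{σ ∈ S3} Li_{k_{σ(1)},k_{σ(2)},k_{σ(3)}}(z_{σ(1)}, z_{σ(1)}z_{σ(2)}, z_{σ(1)}z_{σ(2)}z_{σ(3)}) + Σ_{τ ∈ A3} Li_{k_{τ(1)}+k_{τ(2)},k_{τ(3)}}(z_{τ(1)}z_{τ(2)}, z_{τ(1)}z_{τ(2)}z_{τ(3)}) + Σ_{τ ∈ A3} Li_{k_{τ(1)},k_{τ(2)}+k_{τ(3)}}(z_{τ(1)}, z_{τ(1)}z_{τ(2)}z_{τ(3)}) + Li_{k1+k2+k3}(z1·z2·z3), where S3 is the symmetric group and A3 the alternating group on three letters. -/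
/-!
Expanding the product gives the absolutely convergent sum of `∏ᵢ zᵢ ^ mᵢ / mᵢ ^ kᵢ` over all
triples `m` of positive integers. Split the triples according to the weak order they induce on
the indices: the six strict orders `m_{σ0} > m_{σ1} > m_{σ2}` give the `Li3` terms, the ties
`m_{τ0} = m_{τ1} > m_{τ2}` and `m_{τ0} > m_{τ1} = m_{τ2}` (one for each pair of indices, hence
`τ ∈ A₃`) give the two families of `Li2` terms, and `m₀ = m₁ = m₂` gives the last term. On a
strict region, with `a > b > c` the values of `m_{σ0}, m_{σ1}, m_{σ2}`, the identity
`z_{σ0} ^ a z_{σ1} ^ b z_{σ2} ^ c = z_{σ0} ^ (a - b) (z_{σ0} z_{σ1}) ^ (b - c) (z_{σ0} z_{σ1} z_{σ2}) ^ c`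
turns the sum into the defining series, and likewise on the other regions.
-/

open Finset

section ProductOfSeries

variable {α R : Type*} [NormedCommRing R] [CompleteSpace R]

theorem summable_norm_prod_and_hasSum_prod_fin {n : ℕ} {f : Fin n → α → R}
    (hf : ∀ i, Summable fun a => ‖f i a‖) :
    (Summable fun t : Fin n → α => ‖∏ i, f i (t i)‖) ∧
      HasSum (fun t : Fin n → α => ∏ i, f i (t i)) (∏ i, ∑' a, f i a) := by
  induction n with
  | zero => exact ⟨.of_finite, by simp⟩
  | succ n ih =>
    obtain ⟨ih_norm, ih_sum⟩ := ih fun i => hf i.succ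
    let e := Fin.consEquiv fun _ : Fin (n + 1) => α
    have h_cons (p : α × (Fin n → α)) :
        ∏ i, f i (e p i) = f 0 p.1 * ∏ i, f i.succ (p.2 i) := by
      simp [e, Fin.prod_univ_succ]
    refine ⟨e.summable_iff.mp ?_, e.hasSum_iff.mp ?_⟩
    · simpa only [Function.comp_def, h_cons] using (hf 0).mul_norm ih_norm
    · rw [Fin.prod_univ_succ, ← ih_sum.tsum_eq, tsum_mul_tsum_of_summable_norm (hf 0) ih_norm]
      simpa only [Function.comp_def, h_cons] using
        (summable_mul_of_summable_norm (hf 0) ih_norm).hasSum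

end ProductOfSeries

lemma pow_sub_mul_mul_pow {M : Type*} [CommMonoid M] (x y : M) {m n : ℕ} (h : m ≤ n) :
    x ^ (n - m) * (x * y) ^ m = x ^ n * y ^ m := by
  rw [mul_pow, ← mul_assoc, pow_sub_mul_pow x h]

lemma norm_pow_div_natCast_pow_le (z : ℂ) (m k : ℕ) : ‖z ^ m / (m : ℂ) ^ k‖ ≤ ‖z‖ ^ m := by
  rw [norm_div, norm_pow, norm_pow, Complex.norm_natCast]
  rcases Nat.eq_zero_or_pos m with rfl | hm
  · rcases Nat.eq_zero_or_pos k with rfl | hk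
    · simp
    · simp [zero_pow hk.ne']
  · exact div_le_self (by positivity) (one_le_pow₀ (by exact_mod_cast hm))

lemma summable_norm_pow_div_natCast_pow {z : ℂ} (hz : ‖z‖ < 1) (k : ℕ) :
    Summable fun m : ℕ => ‖z ^ m / (m : ℂ) ^ k‖ :=
  (summable_geometric_of_lt_one (norm_nonneg _) hz).of_nonneg_of_le (fun _ => norm_nonneg _)
    (norm_pow_div_natCast_pow_le z · k)

lemma tsum_ite_eq_tsum_ite_comp {β γ M : Type*} [AddCommMonoid M] [TopologicalSpace M]
    {g : γ → β} (hg : g.Injective) {P : β → Prop} [DecidablePred P]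
    (hP : ∀ b, P b → b ∈ Set.range g) (f : β → M) :
    ∑' b, (if P b then f b else 0) = ∑' c, if P (g c) then f (g c) else 0 :=
  (hg.tsum_eq fun b hb => hP b (by_contra fun h => hb (if_neg h))).symm

namespace Polylog

variable {ι : Type*} [Fintype ι]

noncomputable def term (k : ι → ℕ) (z : ι → ℂ) (t : ι → ℕ) : ℂ :=
  ∏ i, z i ^ t i / (t i : ℂ) ^ k i

lemma summable_norm_term {n : ℕ} (k : Fin n → ℕ) {z : Fin n → ℂ} (hz : ∀ i, ‖z i‖ < 1) :
    Summable fun t => ‖term k z t‖ :=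
  (summable_norm_prod_and_hasSum_prod_fin fun i =>
    summable_norm_pow_div_natCast_pow (hz i) (k i)).1

lemma summable_ite_term {n : ℕ} (k : Fin n → ℕ) {z : Fin n → ℂ} (hz : ∀ i, ‖z i‖ < 1)
    (P : (Fin n → ℕ) → Prop) [DecidablePred P] :
    Summable fun t => if P t then term k z t else 0 :=
  (summable_norm_term k hz).of_norm_bounded fun t => by split_ifs <;> simp

theorem prod_Li_eq_tsum {n : ℕ} (k : Fin n → ℕ) {z : Fin n → ℂ} (hz : ∀ i, ‖z i‖ < 1) :
    ∏ i, Li (k i) (z i) = ∑' t : Fin n → ℕ, if ∀ i, 0 < t i then term k z t else 0 := by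
  have h_summand (i : Fin n) :
      Summable fun m : ℕ => ‖if 0 < m then z i ^ m / (m : ℂ) ^ k i else 0‖ :=
    (summable_norm_pow_div_natCast_pow (hz i) (k i)).of_nonneg_of_le (fun _ => norm_nonneg _)
      fun m => by split_ifs <;> simp [div_nonneg]
  simp only [Li, ← (summable_norm_prod_and_hasSum_prod_fin h_summand).2.tsum_eq,
    Fintype.prod_ite_zero, term]
  -- the two sides carry different `Decidable (∀ i, 0 < t i)` instances
  congr!

lemma tsum_ite_comp_perm_term (σ : Equiv.Perm ι) (P : (ι → ℕ) → Prop) [DecidablePred P]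
    (k : ι → ℕ) (z : ι → ℂ) :
    ∑' t, (if P (t ∘ σ) then term k z t else 0)
      = ∑' s, if P s then term (k ∘ σ) (z ∘ σ) s else 0 := by
  rw [← (σ.arrowCongr (Equiv.refl ℕ)).tsum_eq]
  refine tsum_congr fun s => ?_
  have hs : σ.arrowCongr (Equiv.refl ℕ) s ∘ σ = s := by ext; simp [Equiv.arrowCongr_apply]
  rw [hs, term, term, ← Equiv.prod_comp σ]
  simp [Equiv.arrowCongr_apply]

section ThreeVariables

abbrev IsStrictChain (s : Fin 3 → ℕ) : Prop := s 1 < s 0 ∧ s 2 < s 1 ∧ 0 < s 2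

abbrev IsTopTie (s : Fin 3 → ℕ) : Prop := s 0 = s 1 ∧ s 2 < s 1 ∧ 0 < s 2

abbrev IsBottomTie (s : Fin 3 → ℕ) : Prop := s 1 = s 2 ∧ s 2 < s 0 ∧ 0 < s 2

abbrev IsDiagonal (s : Fin 3 → ℕ) : Prop := s 0 = s 1 ∧ s 1 = s 2 ∧ 0 < s 2

variable (k : Fin 3 → ℕ) (z : Fin 3 → ℂ)

lemma tsum_ite_isStrictChain_term :
    ∑' t, (if IsStrictChain t then term k z t else 0)
      = Li3 (k 0) (k 1) (k 2) (z 0) (z 0 * z 1) (z 0 * z 1 * z 2) := by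
  rw [tsum_ite_eq_tsum_ite_comp (g := fun p : ℕ × ℕ × ℕ => ![p.1, p.2.1, p.2.2])
    (fun p q h => Prod.ext (congr_fun h 0) (Prod.ext (congr_fun h 1) (congr_fun h 2)))
    (fun t _ => ⟨(t 0, t 1, t 2), by ext i; fin_cases i <;> rfl⟩), Li3]
  refine tsum_congr fun ⟨a, b, c⟩ => ?_
  simp only [IsStrictChain, term, Fin.prod_univ_three, Matrix.cons_val]
  split_ifs with h
  · obtain ⟨hba, hcb, -⟩ := h
    have hnum : z 0 ^ (a - b) * (z 0 * z 1) ^ (b - c) * (z 0 * z 1 * z 2) ^ c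
        = z 0 ^ a * z 1 ^ b * z 2 ^ c := by
      rw [mul_assoc, pow_sub_mul_mul_pow _ _ hcb.le, ← mul_assoc, pow_sub_mul_mul_pow _ _ hba.le]
    rw [hnum]
    ring
  · rfl

lemma tsum_ite_isTopTie_term :
    ∑' t, (if IsTopTie t then term k z t else 0)
      = Li2 (k 0 + k 1) (k 2) (z 0 * z 1) (z 0 * z 1 * z 2) := by
  rw [tsum_ite_eq_tsum_ite_comp (g := fun p : ℕ × ℕ => ![p.1, p.1, p.2])
    (fun p q h => Prod.ext (congr_fun h 0) (congr_fun h 2))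
    (fun t h => ⟨(t 0, t 2), by ext i; fin_cases i <;> simp [h.1]⟩), Li2]
  refine tsum_congr fun p => ?_
  simp only [IsTopTie, term, Fin.prod_univ_three, Matrix.cons_val, true_and]
  split_ifs with h
  · rw [pow_sub_mul_mul_pow _ _ h.1.le]
    ring
  · rfl

lemma tsum_ite_isBottomTie_term :
    ∑' t, (if IsBottomTie t then term k z t else 0)
      = Li2 (k 0) (k 1 + k 2) (z 0) (z 0 * z 1 * z 2) := by
  rw [tsum_ite_eq_tsum_ite_comp (g := fun p : ℕ × ℕ => ![p.1, p.2, p.2])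
    (fun p q h => Prod.ext (congr_fun h 0) (congr_fun h 2))
    (fun t h => ⟨(t 0, t 2), by ext i; fin_cases i <;> simp [h.1]⟩), Li2]
  refine tsum_congr fun p => ?_
  simp only [IsBottomTie, term, Fin.prod_univ_three, Matrix.cons_val, true_and]
  split_ifs with h
  · rw [mul_assoc (z 0), pow_sub_mul_mul_pow _ _ h.1.le]
    ring
  · rfl

lemma tsum_ite_isDiagonal_term :
    ∑' t, (if IsDiagonal t then term k z t else 0) = Li (k 0 + k 1 + k 2) (z 0 * z 1 * z 2) := by
  rw [tsum_ite_eq_tsum_ite_comp (g := fun n : ℕ => fun _ : Fin 3 => n)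
    (fun m n h => congr_fun h 0)
    (fun t h => ⟨t 2, by ext i; fin_cases i <;> simp [h.1, h.2.1]⟩), Li]
  refine tsum_congr fun n => ?_
  simp only [IsDiagonal, term, Fin.prod_univ_three, true_and]
  split_ifs
  · ring
  · rfl

lemma ite_forall_pos_eq_sum_regions {M : Type*} [AddCommMonoid M] (t : Fin 3 → ℕ) (x : M) :
    (if ∀ i, 0 < t i then x else 0) =
      (∑ σ : Equiv.Perm (Fin 3), if IsStrictChain (t ∘ σ) then x else 0)
      + (∑ τ ∈ univ.filter (fun τ : Equiv.Perm (Fin 3) => Equiv.Perm.sign τ = 1),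
          if IsTopTie (t ∘ τ) then x else 0)
      + (∑ τ ∈ univ.filter (fun τ : Equiv.Perm (Fin 3) => Equiv.Perm.sign τ = 1),
          if IsBottomTie (t ∘ τ) then x else 0)
      + if IsDiagonal t then x else 0 := by
  have h_univ : (univ : Finset (Equiv.Perm (Fin 3))) =
      {1, Equiv.swap 0 1, Equiv.swap 0 2, Equiv.swap 1 2,
        Equiv.swap 0 2 * Equiv.swap 0 1, Equiv.swap 0 1 * Equiv.swap 0 2} := by decide
  have h_alt : univ.filter (fun τ : Equiv.Perm (Fin 3) => Equiv.Perm.sign τ = 1) =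
      {1, Equiv.swap 0 2 * Equiv.swap 0 1, Equiv.swap 0 1 * Equiv.swap 0 2} := by decide
  rw [h_alt, h_univ]
  simp +decide only [sum_insert, mem_insert, mem_singleton, sum_singleton]
  -- `rw` rather than `simp`, so that the `Decidable` instances are rewritten as well
  rw [Equiv.Perm.coe_one, Function.comp_id]
  simp +decide only [IsStrictChain, IsTopTie, IsBottomTie, IsDiagonal,
    Function.comp_apply, Equiv.Perm.mul_apply, Equiv.swap_apply_left, Equiv.swap_apply_right,
    Equiv.swap_apply_of_ne_of_ne, ne_eq, Fin.forall_fin_succ, Fin.succ_zero_eq_one,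
    Fin.succ_one_eq_two, IsEmpty.forall_iff, and_true]
  by_cases hpos : 0 < t 0 ∧ 0 < t 1 ∧ 0 < t 2
  · rcases lt_trichotomy (t 0) (t 1) with h01 | h01 | h01 <;>
    rcases lt_trichotomy (t 1) (t 2) with h12 | h12 | h12 <;>
    rcases lt_trichotomy (t 0) (t 2) with h02 | h02 | h02 <;>
    first
    | (exfalso; omega)
    | simp (disch := omega) only [if_pos, if_neg, add_zero, zero_add]
  · simp (disch := omega) only [if_neg, add_zero]

lemma tsum_ite_forall_pos_term_eq_sum_regions (hz : ∀ i, ‖z i‖ < 1) :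
    ∑' t, (if ∀ i, 0 < t i then term k z t else 0) =
      (∑ σ : Equiv.Perm (Fin 3), ∑' t, if IsStrictChain (t ∘ σ) then term k z t else 0)
      + (∑ τ ∈ univ.filter (fun τ : Equiv.Perm (Fin 3) => Equiv.Perm.sign τ = 1),
          ∑' t, if IsTopTie (t ∘ τ) then term k z t else 0)
      + (∑ τ ∈ univ.filter (fun τ : Equiv.Perm (Fin 3) => Equiv.Perm.sign τ = 1),
          ∑' t, if IsBottomTie (t ∘ τ) then term k z t else 0)
      + ∑' t, if IsDiagonal t then term k z t else 0 := by
  have hs := summable_ite_term k hz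
  have h_sum (s : Finset (Equiv.Perm (Fin 3))) (P : (Fin 3 → ℕ) → Prop) [DecidablePred P] :
      Summable fun t => ∑ σ ∈ s, if P (t ∘ σ) then term k z t else 0 :=
    summable_sum fun σ _ => hs fun t => P (t ∘ σ)
  rw [tsum_congr fun t => ite_forall_pos_eq_sum_regions t (term k z t),
    ((h_sum _ _).add (h_sum _ _) |>.add (h_sum _ _)).tsum_add (hs _),
    ((h_sum _ _).add (h_sum _ _)).tsum_add (h_sum _ _), (h_sum _ _).tsum_add (h_sum _ _),
    Summable.tsum_finsetSum fun σ _ => hs _, Summable.tsum_finsetSum fun σ _ => hs _,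
    Summable.tsum_finsetSum fun σ _ => hs _]

end ThreeVariables

end Polylog

theorem triple_product_polylog_general (k : Fin 3 → ℕ)
    (z : Fin 3 → ℂ) (hz : ∀ i, ‖z i‖ < 1) :
    Li (k 0) (z 0) * Li (k 1) (z 1) * Li (k 2) (z 2) =
      (∑ σ : Equiv.Perm (Fin 3),
        Li3 (k (σ 0)) (k (σ 1)) (k (σ 2)) (z (σ 0)) (z (σ 0) * z (σ 1))
          (z (σ 0) * z (σ 1) * z (σ 2)))
      + (∑ τ ∈ Finset.univ.filter (fun τ : Equiv.Perm (Fin 3) => Equiv.Perm.sign τ = 1),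
        Li2 (k (τ 0) + k (τ 1)) (k (τ 2)) (z (τ 0) * z (τ 1)) (z (τ 0) * z (τ 1) * z (τ 2)))
      + (∑ τ ∈ Finset.univ.filter (fun τ : Equiv.Perm (Fin 3) => Equiv.Perm.sign τ = 1),
        Li2 (k (τ 0)) (k (τ 1) + k (τ 2)) (z (τ 0)) (z (τ 0) * z (τ 1) * z (τ 2)))
      + Li (k 0 + k 1 + k 2) (z 0 * z 1 * z 2) := by
  rw [← Fin.prod_univ_three fun i => Li (k i) (z i), Polylog.prod_Li_eq_tsum k hz,
    Polylog.tsum_ite_forall_pos_term_eq_sum_regions k z hz, Polylog.tsum_ite_isDiagonal_term]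
  simp only [Polylog.tsum_ite_comp_perm_term, Polylog.tsum_ite_isStrictChain_term,
    Polylog.tsum_ite_isTopTie_term, Polylog.tsum_ite_isBottomTie_term]
  rfl

theorem triple_product_polylog (k : Fin 3 → ℕ) (hk : ∀ i, 0 < k i)
    (z : Fin 3 → ℂ) (hz : ∀ i, ‖z i‖ < 1) :
    Li (k 0) (z 0) * Li (k 1) (z 1) * Li (k 2) (z 2) =
      (∑ σ : Equiv.Perm (Fin 3),
        Li3 (k (σ 0)) (k (σ 1)) (k (σ 2)) (z (σ 0)) (z (σ 0) * z (σ 1))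
          (z (σ 0) * z (σ 1) * z (σ 2)))
      + (∑ τ ∈ Finset.univ.filter (fun τ : Equiv.Perm (Fin 3) => Equiv.Perm.sign τ = 1),
        Li2 (k (τ 0) + k (τ 1)) (k (τ 2)) (z (τ 0) * z (τ 1)) (z (τ 0) * z (τ 1) * z (τ 2)))
      + (∑ τ ∈ Finset.univ.filter (fun τ : Equiv.Perm (Fin 3) => Equiv.Perm.sign τ = 1),
        Li2 (k (τ 0)) (k (τ 1) + k (τ 2)) (z (τ 0)) (z (τ 0) * z (τ 1) * z (τ 2)))
      + Li (k 0 + k 1 + k 2) (z 0 * z 1 * z 2) :=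
  triple_product_polylog_general k z hz
end

section
/- For a complex number z with |z| < 1, the double polylogarithm satisfies 2·Li_{1,1}(z,z) = Li_1(z)^2 and 2·Li_{1,1}(z,z^2) + Li_2(z^2) = Li_1(z)^2, where Li_{1,1}(z1,z2) = Σ_{m1>m2>0} z1^{m1-m2} z2^{m2}/(m1·m2), Li_1(z) = Σ_{m>0} z^m/m, and Li_2(w) = Σ_{m>0} w^m/m^2. -/
theorem tsum_prod_eq_two_nsmul_tsum_lt_add_tsum_diag {α M : Type*} [LinearOrder α]
    [AddCommGroup M] [UniformSpace M] [IsUniformAddGroup M] [CompleteSpace M] [T2Space M]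
    {f : α × α → M} (hf : Summable f)
    (hf_swap : ∀ p, f p.swap = f p) :
    ∑' p, f p = 2 • ∑' p : α × α, (if p.2 < p.1 then f p else 0) + ∑' a, f (a, a) := by
  set below : α × α → M := fun p => if p.2 < p.1 then f p else 0
  set above : α × α → M := fun p => if p.1 < p.2 then f p else 0
  set diag : α × α → M := fun p => if p.1 = p.2 then f p else 0
  have h_split : ∀ p, f p = below p + above p + diag p := by
    intro p
    rcases lt_trichotomy p.1 p.2 with h | h | h
    · simp [below, above, diag, h, h.ne, h.not_gt]
    · simp [below, above, diag, h]
    · simp [below, above, diag, h, h.ne', h.not_gt]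
  have h_sub : ∀ (P : α × α → Prop) [DecidablePred P],
      Summable fun p => if P p then f p else 0 := fun P _ =>
    hf.summable_of_eq_zero_or_self fun p => by split_ifs <;> simp
  have h_above : ∑' p, above p = ∑' p, below p := by
    rw [← (Equiv.prodComm α α).tsum_eq below]
    exact tsum_congr fun p => by simp [above, below, hf_swap]
  have h_diag : ∑' p, diag p = ∑' a, f (a, a) := by
    have h_inj : Function.Injective fun a : α => (a, a) := fun a b h => (Prod.mk.inj h).1
    refine (h_inj.tsum_eq fun p hp => ?_).symm.trans (tsum_congr fun a => by simp [diag])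
    by_cases h : p.1 = p.2
    · exact ⟨p.1, Prod.ext rfl h⟩
    · simp [diag, h] at hp
  calc ∑' p, f p = ∑' p, (below p + above p + diag p) := tsum_congr h_split
    _ = ∑' p, below p + ∑' p, above p + ∑' p, diag p := by
      rw [((h_sub _).add (h_sub _)).tsum_add (h_sub _), (h_sub _).tsum_add (h_sub _)]
    _ = 2 • ∑' p, below p + ∑' a, f (a, a) := by rw [h_above, h_diag, two_nsmul]

noncomputable def polylogTerm (k : ℕ) (z : ℂ) (m : ℕ) : ℂ :=
  if 0 < m then z ^ m / (m : ℂ) ^ k else 0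

noncomputable def doublePolylogTerm (k1 k2 : ℕ) (z1 z2 : ℂ) (p : ℕ × ℕ) : ℂ :=
  if p.2 < p.1 ∧ 0 < p.2 then
    z1 ^ (p.1 - p.2) * z2 ^ p.2 / ((p.1 : ℂ) ^ k1 * (p.2 : ℂ) ^ k2) else 0

theorem Li_eq_tsum_polylogTerm (k : ℕ) (z : ℂ) : Li k z = ∑' m, polylogTerm k z m := rfl

theorem Li2_eq_tsum_doublePolylogTerm (k1 k2 : ℕ) (z1 z2 : ℂ) :
    Li2 k1 k2 z1 z2 = ∑' p, doublePolylogTerm k1 k2 z1 z2 p := rfl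

theorem norm_polylogTerm_le (k : ℕ) (z : ℂ) (m : ℕ) : ‖polylogTerm k z m‖ ≤ ‖z‖ ^ m := by
  unfold polylogTerm
  split_ifs with hm
  · rw [norm_div, norm_pow, norm_pow, Complex.norm_natCast]
    exact div_le_self (by positivity) (one_le_pow₀ (by exact_mod_cast hm))
  · simp

theorem summable_norm_polylogTerm (k : ℕ) {z : ℂ} (hz : ‖z‖ < 1) :
    Summable fun m => ‖polylogTerm k z m‖ :=
  (summable_geometric_of_lt_one (norm_nonneg z) hz).of_nonneg_of_le (fun _ => norm_nonneg _)
    (norm_polylogTerm_le k z)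

theorem summable_norm_polylogTerm_mul (k : ℕ) {z : ℂ} (hz : ‖z‖ < 1) :
    Summable fun p : ℕ × ℕ => ‖polylogTerm k z p.1 * polylogTerm k z p.2‖ :=
  (summable_norm_polylogTerm k hz).mul_norm (summable_norm_polylogTerm k hz)

theorem Li_sq_eq_tsum (k : ℕ) {z : ℂ} (hz : ‖z‖ < 1) :
    Li k z ^ 2 = ∑' p : ℕ × ℕ, polylogTerm k z p.1 * polylogTerm k z p.2 := by
  have h := summable_norm_polylogTerm k hz
  rw [Li_eq_tsum_polylogTerm, sq, tsum_mul_tsum_of_summable_norm h h]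

theorem polylogTerm_one_mul_self (z : ℂ) (m : ℕ) :
    polylogTerm 1 z m * polylogTerm 1 z m = polylogTerm 2 (z ^ 2) m := by
  unfold polylogTerm
  split_ifs <;> ring

theorem doublePolylogTerm_one_one_sq (z : ℂ) (p : ℕ × ℕ) :
    doublePolylogTerm 1 1 z (z ^ 2) p =
      if p.2 < p.1 then polylogTerm 1 z p.1 * polylogTerm 1 z p.2 else 0 := by
  obtain ⟨m, n⟩ := p
  unfold doublePolylogTerm polylogTerm
  by_cases hnm : n < m
  · rcases Nat.eq_zero_or_pos n with rfl | hn
    · simp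
    · have hz : z ^ (m - n) * (z ^ 2) ^ n = z ^ m * z ^ n := by
        rw [← pow_mul, ← pow_add, ← pow_add]; congr 1; omega
      simp only [hnm, hn, true_and, if_true, lt_trans hn hnm, hz]
      ring
  · simp [hnm]

theorem tsum_doublePolylogTerm_add_snd (k1 k2 : ℕ) (z1 z2 : ℂ) :
    ∑' q : ℕ × ℕ, doublePolylogTerm k1 k2 z1 z2 (q.1 + q.2, q.2) = Li2 k1 k2 z1 z2 := by
  have h_inj : Function.Injective fun q : ℕ × ℕ => (q.1 + q.2, q.2) := by
    rintro ⟨a, b⟩ ⟨c, d⟩ h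
    simp only [Prod.mk.injEq] at h ⊢
    omega
  refine h_inj.tsum_eq fun p hp => ?_
  by_cases h : p.2 < p.1 ∧ 0 < p.2
  · exact ⟨(p.1 - p.2, p.2), Prod.ext (Nat.sub_add_cancel h.1.le) rfl⟩
  · simp [doublePolylogTerm, h] at hp

theorem doublePolylogTerm_add_snd (k1 k2 : ℕ) (z1 z2 : ℂ) {m n : ℕ} (hm : 0 < m) (hn : 0 < n) :
    doublePolylogTerm k1 k2 z1 z2 (m + n, n) =
      z1 ^ m * z2 ^ n / (((m + n : ℕ) : ℂ) ^ k1 * (n : ℂ) ^ k2) := by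
  rw [doublePolylogTerm, if_pos ⟨by omega, hn⟩, Nat.add_sub_cancel]

theorem doublePolylogTerm_add_snd_eq_zero (k1 k2 : ℕ) (z1 z2 : ℂ) {m n : ℕ}
    (h : m = 0 ∨ n = 0) :
    doublePolylogTerm k1 k2 z1 z2 (m + n, n) = 0 := by
  rw [doublePolylogTerm, if_neg (by omega)]

theorem norm_doublePolylogTerm_add_snd_le (z : ℂ) (q : ℕ × ℕ) :
    ‖doublePolylogTerm 1 1 z z (q.1 + q.2, q.2)‖ ≤
      ‖polylogTerm 1 z q.1 * polylogTerm 1 z q.2‖ := by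
  obtain ⟨m, n⟩ := q
  by_cases h : 0 < m ∧ 0 < n
  · rw [doublePolylogTerm_add_snd 1 1 z z h.1 h.2, polylogTerm, polylogTerm, if_pos h.1, if_pos h.2]
    simp only [norm_div, norm_mul, norm_pow, pow_one, Complex.norm_natCast]
    rw [div_mul_div_comm]
    push_cast
    have : (0 : ℝ) < m := by exact_mod_cast h.1
    have : (0 : ℝ) < n := by exact_mod_cast h.2
    gcongr
    linarith
  · rw [doublePolylogTerm_add_snd_eq_zero 1 1 z z (by omega), norm_zero]
    exact norm_nonneg _

theorem polylogTerm_one_mul_eq_add (z : ℂ) (m n : ℕ) :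
    polylogTerm 1 z m * polylogTerm 1 z n =
      doublePolylogTerm 1 1 z z (m + n, n) + doublePolylogTerm 1 1 z z (n + m, m) := by
  by_cases h : 0 < m ∧ 0 < n
  · rw [doublePolylogTerm_add_snd 1 1 z z h.1 h.2, doublePolylogTerm_add_snd 1 1 z z h.2 h.1,
      polylogTerm, polylogTerm, if_pos h.1, if_pos h.2]
    have : (m : ℂ) ≠ 0 := Nat.cast_ne_zero.mpr h.1.ne'
    have : (n : ℂ) ≠ 0 := Nat.cast_ne_zero.mpr h.2.ne'
    have : ((m + n : ℕ) : ℂ) ≠ 0 := Nat.cast_ne_zero.mpr (by omega)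
    rw [add_comm n m]
    field_simp
    push_cast
    ring
  · rw [doublePolylogTerm_add_snd_eq_zero 1 1 z z (by omega),
      doublePolylogTerm_add_snd_eq_zero 1 1 z z (by omega), polylogTerm, polylogTerm]
    rcases not_and_or.mp h with h | h <;> simp [h]

theorem double_polylog_weight_two (z : ℂ) (hz : ‖z‖ < 1) :
    2 * Li2 1 1 z z = (Li 1 z) ^ 2 ∧
    2 * Li2 1 1 z (z ^ 2) + Li 2 (z ^ 2) = (Li 1 z) ^ 2 := by
  have h_prod := summable_norm_polylogTerm_mul 1 hz
  constructor
  · set D : ℕ × ℕ → ℂ := fun q => doublePolylogTerm 1 1 z z (q.1 + q.2, q.2)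
    have hD : Summable D := Summable.of_norm_bounded h_prod (norm_doublePolylogTerm_add_snd_le z)
    have hD_swap : Summable fun q : ℕ × ℕ => D q.swap := hD.comp_injective Prod.swap_injective
    have hD_tsum : ∑' q, D q = Li2 1 1 z z := tsum_doublePolylogTerm_add_snd 1 1 z z
    have hD_swap_tsum : ∑' q : ℕ × ℕ, D q.swap = ∑' q, D q := (Equiv.prodComm ℕ ℕ).tsum_eq D
    calc 2 * Li2 1 1 z z = ∑' q, D q + ∑' q : ℕ × ℕ, D q.swap := by
          rw [hD_swap_tsum, hD_tsum, two_mul]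
      _ = ∑' q, (D q + D q.swap) := (hD.tsum_add hD_swap).symm
      _ = Li 1 z ^ 2 := by
          rw [Li_sq_eq_tsum 1 hz]
          exact tsum_congr fun q => (polylogTerm_one_mul_eq_add z q.1 q.2).symm
  · rw [Li_sq_eq_tsum 1 hz, tsum_prod_eq_two_nsmul_tsum_lt_add_tsum_diag h_prod.of_norm
      fun p => mul_comm _ _, Li2_eq_tsum_doublePolylogTerm, Li_eq_tsum_polylogTerm, two_nsmul,
      two_mul]
    simp only [doublePolylogTerm_one_one_sq, polylogTerm_one_mul_self]
end

section
/- For a complex number z with |z| < 1, 6·Li_{1,1,1}(z,z,z) = Li_1(z)^3, i.e., 6·Σ_{m1>m2>m3>0} z^{m1}/(m1·m2·m3) = (Σ_{m>0} z^m/m)^3 = (-log(1-z))^3. -/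
/-!
The coefficient of `z ^ N` in `Li₁(z)³` is `∑ 1/(abc)` over positive `a + b + c = N`.
Multiplying by `N = a + b + c` splits `N/(abc)` into `1/(bc) + 1/(ca) + 1/(ab)`, three sums
that agree by symmetry; likewise `1/(bc) = 1/((b+c)c) + 1/((b+c)b)`. Hence
`N ∑ 1/(abc) = 6 ∑ 1/((b+c)c) = 6 ∑ 1/(m₂m₃)` over `N > m₂ > m₃ > 0`, which is `6N` times the
coefficient of `z ^ N` in `Li_{1,1,1}(z)`. To compare the series themselves, the cube is
reindexed by the tail sums `(a+b+c, b+c, c)`, so that both become sums over `m₁ > m₂ > m₃ > 0`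
that can be grouped by `m₁`.
-/

open Finset

def posTriples (N : ℕ) : Finset (ℕ × ℕ × ℕ) :=
  (Icc 1 N ×ˢ Icc 1 N ×ˢ Icc 1 N).filter fun t => t.1 + t.2.1 + t.2.2 = N

def descPairs (N : ℕ) : Finset (ℕ × ℕ) :=
  (range N ×ˢ range N).filter fun p => p.2 < p.1 ∧ 0 < p.2

theorem mem_posTriples {N : ℕ} {t : ℕ × ℕ × ℕ} :
    t ∈ posTriples N ↔ t.1 + t.2.1 + t.2.2 = N ∧ 0 < t.1 ∧ 0 < t.2.1 ∧ 0 < t.2.2 := by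
  simp only [posTriples, mem_filter, mem_product, mem_Icc]
  omega

theorem mem_descPairs {N : ℕ} {p : ℕ × ℕ} :
    p ∈ descPairs N ↔ p.1 < N ∧ p.2 < p.1 ∧ 0 < p.2 := by
  simp only [descPairs, mem_filter, mem_product, mem_range]
  omega

section Reindexing

variable {M : Type*} [AddCommMonoid M] (N : ℕ) (f : ℕ × ℕ × ℕ → M)

theorem sum_posTriples_rotate :
    ∑ t ∈ posTriples N, f (t.2.1, t.2.2, t.1) = ∑ t ∈ posTriples N, f t :=
  sum_nbij' (fun t => (t.2.1, t.2.2, t.1)) (fun t => (t.2.2, t.1, t.2.1))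
    (by simp only [mem_posTriples]; omega) (by simp only [mem_posTriples]; omega)
    (fun _ _ => rfl) (fun _ _ => rfl) (fun _ _ => rfl)

theorem sum_posTriples_swap :
    ∑ t ∈ posTriples N, f (t.1, t.2.2, t.2.1) = ∑ t ∈ posTriples N, f t :=
  sum_nbij' (fun t => (t.1, t.2.2, t.2.1)) (fun t => (t.1, t.2.2, t.2.1))
    (by simp only [mem_posTriples]; omega) (by simp only [mem_posTriples]; omega)
    (fun _ _ => rfl) (fun _ _ => rfl) (fun _ _ => rfl)

theorem sum_descPairs_eq_sum_posTriples :
    ∑ p ∈ descPairs N, f (N - p.1, p.1 - p.2, p.2) = ∑ t ∈ posTriples N, f t :=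
  sum_nbij' (fun p => (N - p.1, p.1 - p.2, p.2)) (fun t => (t.2.1 + t.2.2, t.2.2))
    (fun p hp => by simp only [mem_descPairs, mem_posTriples] at hp ⊢; omega)
    (fun t ht => by simp only [mem_descPairs, mem_posTriples] at ht ⊢; omega)
    (fun p hp => by simp only [mem_descPairs, Prod.ext_iff, and_true] at hp ⊢; omega)
    (fun t ht => by simp only [mem_posTriples, Prod.ext_iff, and_true] at ht ⊢; omega)
    (fun _ _ => rfl)

end Reindexing

theorem sum_posTriples_inv_mul {K : Type*} [Field K] [CharZero K] (N : ℕ) :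
    ∑ t ∈ posTriples N, ((t.1 : K) * t.2.1 * t.2.2)⁻¹
      = 6 * (∑ p ∈ descPairs N, ((p.1 : K) * p.2)⁻¹) / N := by
  rcases N.eq_zero_or_pos with rfl | hN
  · simp [posTriples]
  rw [eq_div_iff (Nat.cast_ne_zero.2 hN.ne'), mul_comm]
  have hcyc : ∀ g : ℕ × ℕ × ℕ → K, ∑ t ∈ posTriples N, g (t.2.2, t.1, t.2.1)
      = ∑ t ∈ posTriples N, g t := fun g =>
    (sum_posTriples_rotate N fun t => g (t.2.1, t.2.2, t.1)).trans (sum_posTriples_rotate N g)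
  calc (N : K) * ∑ t ∈ posTriples N, ((t.1 : K) * t.2.1 * t.2.2)⁻¹
      = ∑ t ∈ posTriples N,
          (((t.2.1 : K) * t.2.2)⁻¹ + ((t.2.2 : K) * t.1)⁻¹ + ((t.1 : K) * t.2.1)⁻¹) := by
        rw [mul_sum]
        refine sum_congr rfl fun t ht => ?_
        obtain ⟨rfl, ha, hb, hc⟩ := mem_posTriples.1 ht
        have : (t.1 : K) ≠ 0 := Nat.cast_ne_zero.2 ha.ne'
        have : (t.2.1 : K) ≠ 0 := Nat.cast_ne_zero.2 hb.ne'
        have : (t.2.2 : K) ≠ 0 := Nat.cast_ne_zero.2 hc.ne'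
        push_cast
        field_simp
    _ = 3 * ∑ t ∈ posTriples N, ((t.2.1 : K) * t.2.2)⁻¹ := by
        rw [sum_add_distrib, sum_add_distrib,
          sum_posTriples_rotate N fun t => ((t.2.1 : K) * t.2.2)⁻¹,
          hcyc fun t => ((t.2.1 : K) * t.2.2)⁻¹]
        ring
    _ = 3 * ∑ t ∈ posTriples N,
          ((((t.2.1 : K) + t.2.2) * t.2.2)⁻¹ + (((t.2.2 : K) + t.2.1) * t.2.1)⁻¹) := by
        congr 1
        refine sum_congr rfl fun t ht => ?_
        obtain ⟨-, -, hb, hc⟩ := mem_posTriples.1 ht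
        have : (t.2.1 : K) ≠ 0 := Nat.cast_ne_zero.2 hb.ne'
        have : (t.2.2 : K) ≠ 0 := Nat.cast_ne_zero.2 hc.ne'
        have : (t.2.1 : K) + t.2.2 ≠ 0 := by exact_mod_cast (by omega : t.2.1 + t.2.2 ≠ 0)
        rw [add_comm (t.2.2 : K)]
        field_simp
    _ = 6 * ∑ t ∈ posTriples N, (((t.2.1 : K) + t.2.2) * t.2.2)⁻¹ := by
        rw [sum_add_distrib, sum_posTriples_swap N fun t => (((t.2.1 : K) + t.2.2) * t.2.2)⁻¹]
        ring
    _ = 6 * ∑ p ∈ descPairs N, ((p.1 : K) * p.2)⁻¹ := by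
        rw [← sum_descPairs_eq_sum_posTriples N fun t => (((t.2.1 : K) + t.2.2) * t.2.2)⁻¹]
        refine congrArg _ (sum_congr rfl fun p hp => ?_)
        rw [Nat.cast_sub (mem_descPairs.1 hp).2.1.le, sub_add_cancel]

theorem HasSum.cube_of_summable_norm {R ι : Type*} [NormedRing R] [CompleteSpace R] {f : ι → R}
    {s : R} (hf : HasSum f s) (hn : Summable fun i => ‖f i‖) :
    HasSum (fun t : ι × ι × ι => f t.1 * (f t.2.1 * f t.2.2)) (s ^ 3) := by
  have hsq := hf.mul hf (summable_mul_of_summable_norm hn hn)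
  have hprod := summable_mul_of_summable_norm (f := f) (g := fun p : ι × ι => f p.1 * f p.2) hn
    (hn.mul_norm hn)
  have hcube := hf.mul hsq hprod
  rw [pow_three]
  exact hcube

theorem Li_one_eq_neg_log {z : ℂ} (hz : ‖z‖ < 1) : Li 1 z = -Complex.log (1 - z) := by
  rw [← (Complex.hasSum_taylorSeries_neg_log hz).tsum_eq]
  refine tsum_congr fun n => ?_
  rcases n.eq_zero_or_pos with rfl | hn <;> simp [*]

theorem hasSum_Li_one {z : ℂ} (hz : ‖z‖ < 1) : HasSum (fun n : ℕ => z ^ n / n) (Li 1 z) :=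
  Li_one_eq_neg_log hz ▸ Complex.hasSum_taylorSeries_neg_log hz

theorem summable_norm_pow_div_natCast {z : ℂ} (hz : ‖z‖ < 1) :
    Summable fun n : ℕ => ‖z ^ n / n‖ := by
  refine (summable_geometric_of_lt_one (norm_nonneg z) hz).of_nonneg_of_le (fun _ => norm_nonneg _)
    fun n => ?_
  rcases n.eq_zero_or_pos with rfl | hn
  · simp
  rw [norm_div, norm_pow, Complex.norm_natCast]
  exact div_le_self (by positivity) (by exact_mod_cast hn)

def tailSums (t : ℕ × ℕ × ℕ) : ℕ × ℕ × ℕ :=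
  (t.1 + t.2.1 + t.2.2, t.2.1 + t.2.2, t.2.2)

theorem tailSums_injective : Function.Injective tailSums := by
  intro s t h
  simp only [tailSums, Prod.ext_iff] at h ⊢
  omega

theorem mem_range_tailSums {m : ℕ × ℕ × ℕ} (h₁ : m.2.1 ≤ m.1) (h₂ : m.2.2 ≤ m.2.1) :
    m ∈ Set.range tailSums :=
  ⟨(m.1 - m.2.1, m.2.1 - m.2.2, m.2.2), by simp only [tailSums, Prod.ext_iff, and_true]; omega⟩

-- Truncated subtraction and `x / 0 = 0` make the summand vanish unless
-- `m.1 > m.2.1 > m.2.2 > 0`.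
theorem hasSum_Li_one_cube_tailSums {z : ℂ} (hz : ‖z‖ < 1) :
    HasSum (fun m : ℕ × ℕ × ℕ =>
      z ^ m.1 / (((m.1 - m.2.1 : ℕ) : ℂ) * (m.2.1 - m.2.2 : ℕ) * m.2.2)) (Li 1 z ^ 3) := by
  rw [← tailSums_injective.hasSum_iff]
  · refine ((hasSum_Li_one hz).cube_of_summable_norm (summable_norm_pow_div_natCast hz)).congr_fun
      fun t => ?_
    simp only [Function.comp_apply, tailSums, add_assoc, Nat.add_sub_cancel, pow_add,
      div_mul_div_comm, mul_assoc]
  · intro m hm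
    have : m.1 - m.2.1 = 0 ∨ m.2.1 - m.2.2 = 0 := by
      by_contra h
      exact hm (mem_range_tailSums (by omega) (by omega))
    rcases this with h | h <;> simp [h]

theorem hasSum_Li_one_cube {z : ℂ} (hz : ‖z‖ < 1) :
    HasSum (fun N : ℕ => z ^ N * ∑ t ∈ posTriples N, ((t.1 : ℂ) * t.2.1 * t.2.2)⁻¹)
      (Li 1 z ^ 3) := by
  refine (hasSum_Li_one_cube_tailSums hz).prod_fiberwise fun N => ?_
  simp_rw [← sum_descPairs_eq_sum_posTriples, mul_sum, ← div_eq_mul_inv]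
  refine hasSum_sum_of_ne_finset_zero fun p hp => ?_
  have : N - p.1 = 0 ∨ p.1 - p.2 = 0 ∨ p.2 = 0 := by
    rw [mem_descPairs] at hp
    omega
  rcases this with h | h | h <;> simp [h]

noncomputable def li111Term (z : ℂ) (m : ℕ × ℕ × ℕ) : ℂ :=
  if m.2.1 < m.1 ∧ m.2.2 < m.2.1 ∧ 0 < m.2.2 then z ^ m.1 / (m.1 * m.2.1 * m.2.2) else 0

theorem Li3_one_one_one_eq_tsum (z : ℂ) : Li3 1 1 1 z z z = ∑' m, li111Term z m := by
  refine tsum_congr fun m => ?_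
  unfold li111Term
  split_ifs with h
  · rw [← pow_add, ← pow_add, show m.1 - m.2.1 + (m.2.1 - m.2.2) + m.2.2 = m.1 by omega]
    simp only [pow_one]
  · rfl

theorem norm_li111Term_tailSums_le (z : ℂ) (t : ℕ × ℕ × ℕ) :
    ‖li111Term z (tailSums t)‖
      ≤ ‖z ^ t.1 / t.1 * (z ^ t.2.1 / t.2.1 * (z ^ t.2.2 / t.2.2))‖ := by
  obtain ⟨a, b, c⟩ := t
  by_cases h : 0 < a ∧ 0 < b ∧ 0 < c
  · have habc : (0 : ℝ) < a * b * c := by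
      exact_mod_cast Nat.mul_pos (Nat.mul_pos h.1 h.2.1) h.2.2
    rw [li111Term, if_pos (by simp only [tailSums]; omega)]
    simp only [tailSums, norm_div, norm_mul, norm_pow, Complex.norm_natCast]
    rw [div_mul_div_comm, div_mul_div_comm, ← pow_add, ← pow_add, ← add_assoc, ← mul_assoc]
    gcongr <;> omega
  · rw [li111Term, if_neg (by simp only [tailSums]; omega), norm_zero]
    exact norm_nonneg _

theorem summable_li111Term {z : ℂ} (hz : ‖z‖ < 1) : Summable (li111Term z) := by
  have hn := summable_norm_pow_div_natCast hz
  have hsq := hn.mul_norm hn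
  have hprod := hn.mul_norm hsq
  rw [← tailSums_injective.summable_iff]
  · exact Summable.of_norm_bounded hprod (norm_li111Term_tailSums_le z)
  · intro m hm
    exact if_neg fun h => hm (mem_range_tailSums h.1.le h.2.1.le)

theorem hasSum_Li3_one_one_one {z : ℂ} (hz : ‖z‖ < 1) :
    HasSum (fun N : ℕ => z ^ N / N * ∑ p ∈ descPairs N, ((p.1 : ℂ) * p.2)⁻¹)
      (Li3 1 1 1 z z z) := by
  rw [Li3_one_one_one_eq_tsum]
  refine (summable_li111Term hz).hasSum.prod_fiberwise fun N => ?_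
  have hterm : ∀ p ∈ descPairs N, z ^ N / N * ((p.1 : ℂ) * p.2)⁻¹ = li111Term z (N, p) :=
    fun p hp => by
      rw [li111Term, if_pos (mem_descPairs.1 hp)]
      simp only [div_eq_mul_inv, mul_inv]
      ring
  rw [mul_sum, sum_congr rfl hterm]
  exact hasSum_sum_of_ne_finset_zero fun p hp => if_neg fun h => hp (mem_descPairs.2 h)

theorem triple_polylog_weight_three (z : ℂ) (hz : ‖z‖ < 1) :
    6 * Li3 1 1 1 z z z = (Li 1 z) ^ 3 ∧
    (Li 1 z) ^ 3 = (-Complex.log (1 - z)) ^ 3 := by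
  refine ⟨((hasSum_Li3_one_one_one hz).mul_left 6).unique ?_, by rw [Li_one_eq_neg_log hz]⟩
  refine (hasSum_Li_one_cube hz).congr_fun fun N => ?_
  rw [sum_posTriples_inv_mul]
  ring
end

section
/- For an integer k ≥ 3 and a real number z with 0 < z < 1, one has 0 ≤ Li_{1,k-1}(z,z) - Li_{1,k-1}(z,z^3) ≤ 2(1-z)·Li_{1,1}(z,z), where Li_{1,k-1}(z1,z2) = Σ_{m1>m2>0} z1^{m1-m2} z2^{m2}/(m1·m2^{k-1}). -/
noncomputable def rLi2 (k1 k2 : ℕ) (z1 z2 : ℝ) : ℝ :=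
  ∑' p : ℕ × ℕ, if p.2 < p.1 ∧ 0 < p.2 then
    z1 ^ (p.1 - p.2) * z2 ^ p.2 / ((p.1 : ℝ) ^ k1 * (p.2 : ℝ) ^ k2) else 0

/-!
Writing `z ^ 3 = z * z ^ 2`, the summands of the difference are those of `Li_{1,k-1}(z,z)`
multiplied by `1 - (z ^ 2) ^ m₂ ∈ [0, 1]`. Bernoulli's inequality gives
`1 - (z ^ 2) ^ m₂ ≤ m₂ (1 - z ^ 2) ≤ 2 m₂ (1 - z)`, and the factor `m₂` lowers the depth-two
weight from `k - 1` to `k - 2 ≥ 1`, which can only increase the summand.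
-/

lemma one_sub_pow_le_mul_one_sub {w : ℝ} (hw : -1 ≤ w) (n : ℕ) :
    1 - w ^ n ≤ n * (1 - w) := by
  have := one_add_mul_le_pow (a := w - 1) (by linarith) n
  simp only [add_sub_cancel] at this
  linarith

namespace rLi2

noncomputable def term (k1 k2 : ℕ) (z1 z2 : ℝ) (p : ℕ × ℕ) : ℝ :=
  if p.2 < p.1 ∧ 0 < p.2 then
    z1 ^ (p.1 - p.2) * z2 ^ p.2 / ((p.1 : ℝ) ^ k1 * (p.2 : ℝ) ^ k2) else 0

variable {k1 k2 : ℕ} {z1 z2 : ℝ}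

lemma eq_tsum_term : rLi2 k1 k2 z1 z2 = ∑' p, term k1 k2 z1 z2 p := rfl

lemma term_nonneg (h1 : 0 ≤ z1) (h2 : 0 ≤ z2) (p : ℕ × ℕ) : 0 ≤ term k1 k2 z1 z2 p := by
  unfold term
  split_ifs <;> positivity

lemma term_le_pow_mul_pow (h1 : 0 ≤ z1) (h1' : z1 ≤ 1) (h2 : 0 ≤ z2) (a b : ℕ) :
    term k1 k2 z1 z2 (a + b + 1, b) ≤ z1 ^ a * z2 ^ b := by
  unfold term
  split_ifs with hp
  · have hden : 1 ≤ ((a + b + 1 : ℕ) : ℝ) ^ k1 * (b : ℝ) ^ k2 := by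
      have ha : (1 : ℝ) ≤ ((a + b + 1 : ℕ) : ℝ) := by exact_mod_cast Nat.le_add_left 1 _
      have hb : (1 : ℝ) ≤ b := by exact_mod_cast hp.2
      exact one_le_mul_of_one_le_of_one_le (one_le_pow₀ ha) (one_le_pow₀ hb)
    calc z1 ^ (a + b + 1 - b) * z2 ^ b / (((a + b + 1 : ℕ) : ℝ) ^ k1 * (b : ℝ) ^ k2)
        ≤ z1 ^ (a + 1) * z2 ^ b := by
          rw [show a + b + 1 - b = a + 1 by omega]
          exact div_le_self (by positivity) hden
      _ ≤ z1 ^ a * z2 ^ b :=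
          mul_le_mul_of_nonneg_right (pow_le_pow_of_le_one h1 h1' a.le_succ) (pow_nonneg h2 b)
  · positivity

lemma summable_term (h1 : 0 ≤ z1) (h1' : z1 < 1) (h2 : 0 ≤ z2) (h2' : z2 < 1) :
    Summable (term k1 k2 z1 z2) := by
  set ι : ℕ × ℕ → ℕ × ℕ := fun q => (q.1 + q.2 + 1, q.2)
  have hι : Function.Injective ι := fun a b h => by
    simp only [ι, Prod.mk.injEq] at h
    exact Prod.ext (by omega) h.2
  have hzero : ∀ p ∉ Set.range ι, term k1 k2 z1 z2 p = 0 := by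
    rintro ⟨a, b⟩ hp
    have hba : ¬ b < a := fun hba => hp ⟨(a - b - 1, b), by simp only [ι]; ext <;> simp; omega⟩
    simp [term, hba]
  rw [← hι.summable_iff hzero]
  have hgeom : Summable (fun q : ℕ × ℕ => z1 ^ q.1 * z2 ^ q.2) :=
    (summable_geometric_of_lt_one h1 h1').mul_of_nonneg (summable_geometric_of_lt_one h2 h2')
      (pow_nonneg h1) (pow_nonneg h2)
  exact hgeom.of_nonneg_of_le (fun q => term_nonneg h1 h2 _)
    (fun q => term_le_pow_mul_pow h1 h1'.le h2 q.1 q.2)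

lemma term_sub_term_mul (w : ℝ) (p : ℕ × ℕ) :
    term k1 k2 z1 z2 p - term k1 k2 z1 (z2 * w) p = term k1 k2 z1 z2 p * (1 - w ^ p.2) := by
  unfold term
  split_ifs <;> ring

lemma term_succ_mul (p : ℕ × ℕ) : term k1 (k2 + 1) z1 z2 p * p.2 = term k1 k2 z1 z2 p := by
  unfold term
  split_ifs with hp
  · have : (p.2 : ℝ) ≠ 0 := by exact_mod_cast hp.2.ne'
    field_simp
    ring
  · ring

lemma term_antitone_weight {k2' : ℕ} (h : k2 ≤ k2') (h1 : 0 ≤ z1) (h2 : 0 ≤ z2) (p : ℕ × ℕ) :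
    term k1 k2' z1 z2 p ≤ term k1 k2 z1 z2 p := by
  unfold term
  split_ifs with hp
  · have hb : (1 : ℝ) ≤ p.2 := by exact_mod_cast hp.2
    have ha : (0 : ℝ) < p.1 := by exact_mod_cast hp.2.trans hp.1
    gcongr
  · rfl

lemma term_sub_term_mul_le {w : ℝ} (h1 : 0 ≤ z1) (h2 : 0 ≤ z2) (hw : -1 ≤ w) (p : ℕ × ℕ) :
    term k1 (k2 + 1) z1 z2 p - term k1 (k2 + 1) z1 (z2 * w) p ≤ (1 - w) * term k1 k2 z1 z2 p :=
  calc term k1 (k2 + 1) z1 z2 p - term k1 (k2 + 1) z1 (z2 * w) p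
      = term k1 (k2 + 1) z1 z2 p * (1 - w ^ p.2) := term_sub_term_mul w p
    _ ≤ term k1 (k2 + 1) z1 z2 p * (p.2 * (1 - w)) :=
        mul_le_mul_of_nonneg_left (one_sub_pow_le_mul_one_sub hw p.2) (term_nonneg h1 h2 p)
    _ = (1 - w) * term k1 k2 z1 z2 p := by rw [← term_succ_mul (k2 := k2) p]; ring

lemma nonneg (h1 : 0 ≤ z1) (h2 : 0 ≤ z2) : 0 ≤ rLi2 k1 k2 z1 z2 :=
  tsum_nonneg (term_nonneg h1 h2)

lemma antitone_weight {k2' : ℕ} (h : k2 ≤ k2') (h1 : 0 ≤ z1) (h1' : z1 < 1) (h2 : 0 ≤ z2)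
    (h2' : z2 < 1) : rLi2 k1 k2' z1 z2 ≤ rLi2 k1 k2 z1 z2 :=
  (summable_term h1 h1' h2 h2').tsum_le_tsum (term_antitone_weight h h1 h2)
    (summable_term h1 h1' h2 h2')

variable {w : ℝ}

lemma sub_mul_eq_tsum (h1 : 0 ≤ z1) (h1' : z1 < 1) (h2 : 0 ≤ z2) (h2' : z2 < 1) (hw : 0 ≤ w)
    (hw' : w ≤ 1) :
    rLi2 k1 k2 z1 z2 - rLi2 k1 k2 z1 (z2 * w) =
      ∑' p, (term k1 k2 z1 z2 p - term k1 k2 z1 (z2 * w) p) :=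
  ((summable_term h1 h1' h2 h2').tsum_sub (summable_term h1 h1' (mul_nonneg h2 hw)
    ((mul_le_of_le_one_right h2 hw').trans_lt h2'))).symm

lemma sub_mul_nonneg (h1 : 0 ≤ z1) (h1' : z1 < 1) (h2 : 0 ≤ z2) (h2' : z2 < 1) (hw : 0 ≤ w)
    (hw' : w ≤ 1) : 0 ≤ rLi2 k1 k2 z1 z2 - rLi2 k1 k2 z1 (z2 * w) := by
  rw [sub_mul_eq_tsum h1 h1' h2 h2' hw hw']
  refine tsum_nonneg fun p => ?_
  rw [term_sub_term_mul]
  exact mul_nonneg (term_nonneg h1 h2 p) (sub_nonneg.2 (pow_le_one₀ hw hw'))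

lemma sub_mul_le (h1 : 0 ≤ z1) (h1' : z1 < 1) (h2 : 0 ≤ z2) (h2' : z2 < 1) (hw : 0 ≤ w)
    (hw' : w ≤ 1) :
    rLi2 k1 (k2 + 1) z1 z2 - rLi2 k1 (k2 + 1) z1 (z2 * w) ≤ (1 - w) * rLi2 k1 k2 z1 z2 := by
  rw [sub_mul_eq_tsum h1 h1' h2 h2' hw hw', eq_tsum_term, ← tsum_mul_left]
  have hzw : z2 * w < 1 := (mul_le_of_le_one_right h2 hw').trans_lt h2'
  refine Summable.tsum_le_tsum (fun p => term_sub_term_mul_le h1 h2 (by linarith) p) ?_ ?_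
  · exact (summable_term h1 h1' h2 h2').sub (summable_term h1 h1' (mul_nonneg h2 hw) hzw)
  · exact (summable_term h1 h1' h2 h2').mul_left _

end rLi2

theorem polylog_difference_bound (k : ℕ) (hk : 3 ≤ k) (z : ℝ) (h0 : 0 < z) (h1 : z < 1) :
    0 ≤ rLi2 1 (k - 1) z z - rLi2 1 (k - 1) z (z ^ 3) ∧
    rLi2 1 (k - 1) z z - rLi2 1 (k - 1) z (z ^ 3) ≤ 2 * (1 - z) * rLi2 1 1 z z := by
  have hz : 0 ≤ z := h0.le
  have hw : 0 ≤ z ^ 2 := sq_nonneg z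
  have hw' : z ^ 2 ≤ 1 := pow_le_one₀ hz h1.le
  rw [show z ^ 3 = z * z ^ 2 by ring, show k - 1 = (k - 2) + 1 by omega]
  refine ⟨rLi2.sub_mul_nonneg hz h1 hz h1 hw hw', ?_⟩
  calc _ ≤ (1 - z ^ 2) * rLi2 1 (k - 2) z z := rLi2.sub_mul_le hz h1 hz h1 hw hw'
    _ ≤ 2 * (1 - z) * rLi2 1 1 z z :=
        mul_le_mul (by nlinarith) (rLi2.antitone_weight (by omega) hz h1 hz h1)
          (rLi2.nonneg hz hz) (by linarith)
end

section
/- Euler's sum formula for double zeta values: for any integer l ≥ 3, Σ_{l1≥2, l2≥1, l1+l2=l} ζ(l1,l2) = ζ(l), where ζ(l1,l2) = Σ_{m1>m2>0} 1/(m1^{l1} m2^{l2}). -/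
/-- Riemann zeta value -/
noncomputable def rz (l : ℕ) : ℝ :=
  ∑' m : ℕ, if 0 < m then 1 / (m : ℝ) ^ l else 0

/-- double zeta value -/
noncomputable def dz (a b : ℕ) : ℝ :=
  ∑' p : ℕ × ℕ, if p.2 < p.1 ∧ 0 < p.2 then
    1 / ((p.1 : ℝ) ^ a * (p.2 : ℝ) ^ b) else 0

/-- triple zeta value -/
noncomputable def tz (a b c : ℕ) : ℝ :=
  ∑' t : ℕ × ℕ × ℕ, if t.2.1 < t.1 ∧ t.2.2 < t.2.1 ∧ 0 < t.2.2 then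
    1 / ((t.1 : ℝ) ^ a * (t.2.1 : ℝ) ^ b * (t.2.2 : ℝ) ^ c) else 0

/-- admissible triple indices of weight l -/
def TIdx (l : ℕ) : Finset (ℕ × ℕ × ℕ) :=
  (Finset.range (l + 1) ×ˢ Finset.range (l + 1) ×ˢ Finset.range (l + 1)).filter
    (fun t => 2 ≤ t.1 ∧ 1 ≤ t.2.1 ∧ 1 ≤ t.2.2 ∧ t.1 + t.2.1 + t.2.2 = l)

/-!
For `m > n > 0` there is the partial-fraction identity
`∑_{a=2}^{l-1} 1/(m^a n^(l-a)) + 1/(m^(l-1) (m-n)) = 1/(m (m-n) n^(l-2))`.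
Summed over all such pairs, the left side gives `∑ ζ(a, l-a)` plus `∑_m H_(m-1)/m^(l-1)`, where
`H_k` is the `k`-th harmonic number. On the right side, summing first over `m` telescopes:
`∑_{m>n} 1/(m (m-n)) = H_n/n`, so it equals `∑_n H_n/n^(l-1) = ζ(l) + ∑_n H_(n-1)/n^(l-1)`.
Since `H_n ≤ 2√n`, these harmonic series converge for `l ≥ 3` and cancel.
-/

open Finset Filter Topology

theorem harmonic_nonneg (n : ℕ) : 0 ≤ harmonic n :=
  sum_nonneg fun i _ => by positivity

theorem harmonic_le_two_mul_sqrt (n : ℕ) : (harmonic n : ℝ) ≤ 2 * √n := by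
  rcases n.eq_zero_or_pos with rfl | hn
  · simp
  have hsqrt : 0 < √(n : ℝ) := Real.sqrt_pos.2 (by exact_mod_cast hn)
  have hlog : Real.log n ≤ 2 * (√n - 1) := by
    have := Real.log_le_sub_one_of_pos hsqrt
    rw [Real.log_sqrt n.cast_nonneg] at this
    linarith
  linarith [harmonic_le_one_add_log n]

theorem summable_harmonic_div_pow {k : ℕ} (hk : 2 ≤ k) :
    Summable fun n : ℕ => (harmonic n : ℝ) / (n : ℝ) ^ k := by
  have hp : Summable fun n : ℕ => 2 * ((n : ℝ) ^ (3 / 2 : ℝ))⁻¹ :=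
    (Real.summable_nat_rpow_inv.2 (by norm_num)).mul_left 2
  refine hp.of_nonneg_of_le (fun n => by have := harmonic_nonneg n; positivity) fun n => ?_
  rcases n.eq_zero_or_pos with rfl | hn
  · simp
  have hpow : (n : ℝ) ^ (3 / 2 : ℝ) = n ^ 2 / √n := by
    rw [Real.sqrt_eq_rpow, ← Real.rpow_natCast, ← Real.rpow_sub (by positivity)]
    norm_num
  calc (harmonic n : ℝ) / (n : ℝ) ^ k ≤ 2 * √n / (n : ℝ) ^ 2 := by
        gcongr
        · exact harmonic_le_two_mul_sqrt n
        · exact_mod_cast hn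
    _ = 2 * ((n : ℝ) ^ (3 / 2 : ℝ))⁻¹ := by rw [hpow, inv_div]; ring

-- At `n = 0` both sides vanish, since `1 / 0 = 0`.
theorem harmonic_div_pow_sub_harmonic_pred_div_pow (n k : ℕ) :
    (harmonic n : ℝ) / (n : ℝ) ^ k - harmonic (n - 1) / (n : ℝ) ^ k = 1 / (n : ℝ) ^ (k + 1) := by
  rcases n with _ | n
  · simp
  have : (n : ℝ) + 1 ≠ 0 := by positivity
  simp only [harmonic_succ, Nat.add_sub_cancel]
  push_cast
  field_simp
  ring

theorem sum_Ioo_inv_sub_eq_harmonic (m : ℕ) :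
    ∑ n ∈ Ioo 0 m, ((m : ℝ) - n)⁻¹ = harmonic (m - 1) := by
  rw [harmonic_eq_sum_Icc]
  push_cast
  refine sum_nbij' (fun n => m - n) (fun i => m - i) ?_ ?_ ?_ ?_ ?_ <;> intro n hn <;>
    simp only [mem_Ioo, mem_Icc] at hn ⊢
  any_goals omega
  rw [Nat.cast_sub hn.2.le]

theorem hasSum_sub_nat_add_of_antitone {f : ℕ → ℝ} (hf : Antitone f)
    (hlim : Tendsto f atTop (𝓝 0)) (n : ℕ) :
    HasSum (fun k => f k - f (k + n)) (∑ i ∈ range n, f i) := by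
  rw [hasSum_iff_tendsto_nat_of_nonneg fun k => sub_nonneg.2 (hf (Nat.le_add_right k n))]
  have hpartial (N : ℕ) :
      ∑ k ∈ range N, (f k - f (k + n)) = ∑ i ∈ range n, f i - ∑ i ∈ range n, f (N + i) := by
    have h₁ := sum_range_add f N n
    have h₂ := sum_range_add f n N
    rw [add_comm n N] at h₂
    simp only [sum_sub_distrib, add_comm _ n]
    linarith
  have htail : Tendsto (fun N => ∑ i ∈ range n, f (N + i)) atTop (𝓝 0) := by
    simpa using tendsto_finsetSum (range n) fun i _ => hlim.comp (tendsto_add_atTop_nat i)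
  simpa [hpartial] using tendsto_const_nhds.sub htail

theorem sum_range_inv_pow_mul_pow_add {K : Type*} [Field K] {x y : K} (hx : x ≠ 0) (hy : y ≠ 0)
    (hxy : x - y ≠ 0) (k : ℕ) :
    ∑ a ∈ range k, 1 / (x ^ (a + 2) * y ^ (k - a)) + 1 / (x ^ (k + 1) * (x - y))
      = 1 / (x * (x - y) * y ^ k) := by
  induction k with
  | zero => simp
  | succ k ih =>
    have hstep : ∑ a ∈ range (k + 1), 1 / (x ^ (a + 2) * y ^ (k + 1 - a))
        = (∑ a ∈ range k, 1 / (x ^ (a + 2) * y ^ (k - a))) / x + 1 / (x ^ 2 * y ^ (k + 1)) := by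
      rw [sum_range_succ', sum_div]
      congr 1
      refine sum_congr rfl fun a _ => ?_
      rw [Nat.add_sub_add_right]
      field_simp
      ring
    rw [hstep, eq_sub_of_add_eq ih]
    field_simp
    ring

def onDescPairs (f : ℕ → ℕ → ℝ) (p : ℕ × ℕ) : ℝ :=
  if p.2 < p.1 ∧ 0 < p.2 then f p.1 p.2 else 0

theorem onDescPairs_nonneg {f : ℕ → ℕ → ℝ} (hf : ∀ m n, n < m → 0 < n → 0 ≤ f m n)
    (p : ℕ × ℕ) : 0 ≤ onDescPairs f p := by
  unfold onDescPairs
  split_ifs with h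
  exacts [hf _ _ h.1 h.2, le_rfl]

noncomputable def dzTerm (a b : ℕ) : ℕ × ℕ → ℝ :=
  onDescPairs fun m n => 1 / ((m : ℝ) ^ a * (n : ℝ) ^ b)

noncomputable def telescopingTerm (l : ℕ) : ℕ × ℕ → ℝ :=
  onDescPairs fun m n => 1 / ((m : ℝ) * (m - n) * (n : ℝ) ^ (l - 2))

noncomputable def harmonicTerm (l : ℕ) : ℕ × ℕ → ℝ :=
  onDescPairs fun m n => 1 / ((m : ℝ) ^ (l - 1) * (m - n))

theorem dz_eq_tsum_dzTerm (a b : ℕ) : dz a b = ∑' p, dzTerm a b p := rfl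

theorem dzTerm_nonneg (a b : ℕ) (p : ℕ × ℕ) : 0 ≤ dzTerm a b p :=
  onDescPairs_nonneg (fun _ _ _ _ => by positivity) p

theorem harmonicTerm_nonneg (l : ℕ) (p : ℕ × ℕ) : 0 ≤ harmonicTerm l p :=
  onDescPairs_nonneg (fun m n hnm _ => by
    have : (0 : ℝ) < m - n := sub_pos.2 (by exact_mod_cast hnm)
    positivity) p

theorem telescopingTerm_nonneg (l : ℕ) (p : ℕ × ℕ) : 0 ≤ telescopingTerm l p :=
  onDescPairs_nonneg (fun m n hnm _ => by
    have : (0 : ℝ) < m - n := sub_pos.2 (by exact_mod_cast hnm)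
    positivity) p

theorem sum_dzTerm_add_harmonicTerm {l : ℕ} (hl : 2 ≤ l) (p : ℕ × ℕ) :
    ∑ a ∈ Icc 2 (l - 1), dzTerm a (l - a) p + harmonicTerm l p = telescopingTerm l p := by
  rcases p with ⟨m, n⟩
  by_cases h : n < m ∧ 0 < n
  · obtain ⟨k, rfl⟩ := Nat.exists_eq_add_of_le' hl
    simp only [dzTerm, harmonicTerm, telescopingTerm, onDescPairs, if_pos h]
    rw [show k + 2 - 1 = k + 1 by omega, ← Ico_add_one_right_eq_Icc, sum_Ico_eq_sum_range]
    simp only [show k + 2 - 2 = k by omega, Nat.add_sub_add_right, add_comm 2]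
    have hn : (n : ℝ) ≠ 0 := by exact_mod_cast h.2.ne'
    have hm : (m : ℝ) ≠ 0 := by exact_mod_cast (h.2.trans h.1).ne'
    have hmn : (m : ℝ) - n ≠ 0 := sub_ne_zero.2 (by exact_mod_cast h.1.ne')
    exact sum_range_inv_pow_mul_pow_add hm hn hmn k
  · simp [dzTerm, harmonicTerm, telescopingTerm, onDescPairs, h]

theorem hasSum_harmonicTerm_fiber (l m : ℕ) :
    HasSum (fun n => harmonicTerm l (m, n)) (harmonic (m - 1) / (m : ℝ) ^ (l - 1)) := by
  have hsupp : ∀ n ∉ Ioo 0 m, harmonicTerm l (m, n) = 0 := fun n hn =>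
    if_neg fun h => hn (mem_Ioo.2 ⟨h.2, h.1⟩)
  suffices h : ∑ n ∈ Ioo 0 m, harmonicTerm l (m, n) = harmonic (m - 1) / (m : ℝ) ^ (l - 1) from
    h ▸ hasSum_sum_of_ne_finset_zero hsupp
  rw [← sum_Ioo_inv_sub_eq_harmonic, sum_div]
  refine sum_congr rfl fun n hn => ?_
  rw [mem_Ioo] at hn
  simp only [harmonicTerm, onDescPairs, if_pos (And.intro hn.2 hn.1)]
  rw [one_div, mul_inv, div_eq_mul_inv, mul_comm]

theorem hasSum_telescopingTerm_fiber {l : ℕ} (hl : 2 ≤ l) (n : ℕ) :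
    HasSum (fun m => telescopingTerm l (m, n)) (harmonic n / (n : ℝ) ^ (l - 1)) := by
  rcases n.eq_zero_or_pos with rfl | hn
  · simp [telescopingTerm, onDescPairs]
  have htel := (hasSum_sub_nat_add_of_antitone (f := fun k : ℕ => 1 / ((k : ℝ) + 1))
    (fun a b hab => by dsimp only; gcongr) tendsto_one_div_add_atTop_nhds_zero_nat n).mul_left
    ((n : ℝ) ^ (l - 1))⁻¹
  have hzero : ∑ i ∈ range (n + 1), telescopingTerm l (i, n) = 0 :=
    sum_eq_zero fun i hi => if_neg fun h => by rw [mem_range] at hi; omega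
  have hterm : (fun k => telescopingTerm l (k + (n + 1), n))
      = fun k : ℕ => ((n : ℝ) ^ (l - 1))⁻¹ * (1 / ((k : ℝ) + 1) - 1 / (((k + n : ℕ) : ℝ) + 1)) := by
    funext k
    simp only [telescopingTerm, onDescPairs, if_pos (And.intro (by omega : n < k + (n + 1)) hn)]
    obtain ⟨j, rfl⟩ := Nat.exists_eq_add_of_le' hl
    have hn' : (n : ℝ) ≠ 0 := by exact_mod_cast hn.ne'
    have hk : (k : ℝ) + 1 ≠ 0 := by positivity
    rw [show ((k + (n + 1) : ℕ) : ℝ) - n = k + 1 by push_cast; ring,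
      show j + 2 - 1 = j + 1 by omega, show j + 2 - 2 = j by omega]
    push_cast
    field_simp
    ring
  have hval : (harmonic n : ℝ) / (n : ℝ) ^ (l - 1)
      = ((n : ℝ) ^ (l - 1))⁻¹ * ∑ i ∈ range n, 1 / ((i : ℝ) + 1) := by
    unfold harmonic
    push_cast
    simp [div_eq_inv_mul]
  rw [← hasSum_nat_add_iff' (n + 1), hzero, sub_zero, hterm, hval]
  exact htel

theorem summable_telescopingTerm {l : ℕ} (hl : 3 ≤ l) : Summable (telescopingTerm l) := by
  have hfiber := hasSum_telescopingTerm_fiber (by omega : 2 ≤ l)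
  refine (Equiv.prodComm ℕ ℕ).summable_iff.1 <|
    (summable_prod_of_nonneg fun p => telescopingTerm_nonneg l p.swap).2
      ⟨fun n => (hfiber n).summable, ?_⟩
  simpa only [Equiv.prodComm_apply, Prod.swap_prod_mk, (hfiber _).tsum_eq]
    using summable_harmonic_div_pow (by omega : 2 ≤ l - 1)

theorem hasSum_telescopingTerm {l : ℕ} (hl : 3 ≤ l) :
    HasSum (fun n : ℕ => (harmonic n : ℝ) / (n : ℝ) ^ (l - 1)) (∑' p, telescopingTerm l p) := by
  rw [← (Equiv.prodComm ℕ ℕ).tsum_eq]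
  exact ((Equiv.prodComm ℕ ℕ).summable_iff.2 (summable_telescopingTerm hl)).hasSum.prod_fiberwise
    (hasSum_telescopingTerm_fiber (by omega))

theorem summable_harmonicTerm {l : ℕ} (hl : 3 ≤ l) : Summable (harmonicTerm l) :=
  (summable_telescopingTerm hl).of_nonneg_of_le (harmonicTerm_nonneg l) fun p =>
    sum_dzTerm_add_harmonicTerm (l := l) (by omega) p ▸
      le_add_of_nonneg_left (sum_nonneg fun a _ => dzTerm_nonneg a (l - a) p)

theorem summable_dzTerm {l a : ℕ} (hl : 3 ≤ l) (ha : a ∈ Icc 2 (l - 1)) :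
    Summable (dzTerm a (l - a)) :=
  (summable_telescopingTerm hl).of_nonneg_of_le (dzTerm_nonneg a (l - a)) fun p =>
    sum_dzTerm_add_harmonicTerm (l := l) (by omega) p ▸ le_add_of_le_of_nonneg
      (single_le_sum (fun b _ => dzTerm_nonneg b (l - b) p) ha) (harmonicTerm_nonneg l p)

theorem tsum_telescopingTerm_eq {l : ℕ} (hl : 3 ≤ l) :
    ∑' p, telescopingTerm l p = ∑ a ∈ Icc 2 (l - 1), dz a (l - a) + ∑' p, harmonicTerm l p := by
  have hD : ∀ a ∈ Icc 2 (l - 1), Summable (dzTerm a (l - a)) := fun a ha => summable_dzTerm hl ha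
  simp only [dz_eq_tsum_dzTerm]
  rw [← tsum_congr (sum_dzTerm_add_harmonicTerm (by omega)),
    (summable_sum hD).tsum_add (summable_harmonicTerm hl), Summable.tsum_finsetSum hD]

theorem rz_eq_tsum {l : ℕ} (hl : l ≠ 0) : rz l = ∑' n : ℕ, 1 / (n : ℝ) ^ l :=
  tsum_congr fun n => by rcases n.eq_zero_or_pos with rfl | hn <;> simp [*]

theorem euler_sum_formula (l : ℕ) (hl : 3 ≤ l) :
    (∑ l1 ∈ Finset.Icc 2 (l - 1), dz l1 (l - l1)) = rz l := by
  have hH := (summable_harmonicTerm hl).hasSum.prod_fiberwise (hasSum_harmonicTerm_fiber l)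
  have hζ : HasSum (fun n : ℕ => 1 / (n : ℝ) ^ l)
      (∑' p, telescopingTerm l p - ∑' p, harmonicTerm l p) := by
    have h := (hasSum_telescopingTerm hl).sub hH
    simpa only [harmonic_div_pow_sub_harmonic_pred_div_pow, Nat.sub_add_cancel (by omega : 1 ≤ l)]
      using h
  rw [rz_eq_tsum (by omega), hζ.tsum_eq, tsum_telescopingTerm_eq hl, add_sub_cancel_right]
end

section
/- For any integer l ≥ 4 and real numbers x, y, the generating function D_l(x,y) := Σ_{l1≥2, l2≥1, l1+l2=l} x^{l1-1} y^{l2-1} ζ(l1,l2) satisfies D_l(x+y, y) + D_l(x+y, x) = D_l(x,y) + D_l(y,x) + ((x^{l-1} - y^{l-1})/(x - y))·ζ(l), where for x = y the quotient is interpreted as the polynomial Σ_{j=0}^{l-2} x^j y^{l-2-j}. -/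
noncomputable def D (l : ℕ) (x y : ℝ) : ℝ :=
  ∑ l1 ∈ Finset.Icc 2 (l - 1), x ^ (l1 - 1) * y ^ (l - l1 - 1) * dz l1 (l - l1)

/-!
With `k = l - 2`, the degree-`k` part of `1 / ((m - x) (n - y))`, namely `∑ x^i y^(k-i) / (m^(i+1) n^(k+1-i))`,
inherits the partial-fraction identity `1/(AB) = 1/((A+B)B) + 1/((A+B)A)` degree by degree; this is
the shuffle relation before summation. Summed over `m, n ≥ 1`, its right-hand side gives
`D(x+y,y) + D(x+y,x)` apart from the boundary terms `i = 0, k`, which diverge separately. Moving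
them to the left leaves, at the boundary, the kernel `1/m^(k+1) (1/n - 1/(m+n))`, whose rows
telescope to `H_m / m^(k+1)`, so its sum is `ζ(k+1,1) + ζ(k+2)` (the sum formula); the interior
terms sum to `ζ(i+1) ζ(k+1-i)`, which the stuffle product splits into `ζ(i+1,k+1-i) + ζ(k+1-i,i+1)
+ ζ(k+2)`. Matching coefficients of `x^i y^(k-i)` gives the theorem.

Sums over pairs of positive integers `(m, n)` are written over `p : ℕ × ℕ` with
`m = p.1 + 1`, `n = p.2 + 1`.
-/

open Finset Filter Topology

section BinaryForm

variable {R : Type*} [CommSemiring R]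

def binaryForm (k : ℕ) (c : ℕ → R) (x y : R) : R :=
  ∑ i ∈ range (k + 1), c i * x ^ i * y ^ (k - i)

theorem binaryForm_swap (k : ℕ) (c : ℕ → R) (x y : R) :
    binaryForm k c y x = binaryForm k (fun i => c (k - i)) x y := by
  unfold binaryForm
  rw [← sum_range_reflect]
  refine sum_congr rfl fun i hi => ?_
  have hi : i ≤ k := Nat.lt_succ_iff.mp (mem_range.mp hi)
  rw [add_tsub_cancel_right, Nat.sub_sub_self hi]
  ring

theorem binaryForm_add (k : ℕ) (c d : ℕ → R) (x y : R) :
    binaryForm k (fun i => c i + d i) x y = binaryForm k c x y + binaryForm k d x y := by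
  simp only [binaryForm, add_mul, sum_add_distrib]

theorem binaryForm_ite_zero (k : ℕ) (c : ℕ → R) (x y : R) :
    binaryForm k (fun i => if i = 0 then 0 else c i) x y + c 0 * y ^ k = binaryForm k c x y := by
  simp only [binaryForm, sum_range_succ', if_neg (Nat.succ_ne_zero _), if_pos, zero_mul,
    add_zero, pow_zero, mul_one, Nat.sub_zero]

theorem binaryForm_const (k : ℕ) (a x y : R) :
    binaryForm k (fun _ => a) x y = (∑ i ∈ range (k + 1), x ^ i * y ^ (k - i)) * a := by
  rw [binaryForm, sum_mul]
  exact sum_congr rfl fun _ _ => by ring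

end BinaryForm

section Ring
variable {R : Type*} [CommRing R]

theorem binaryForm_sub_single (k : ℕ) (c : ℕ → R) (a : R) {j : ℕ} (hj : j ≤ k) (x y : R) :
    binaryForm k (fun i => c i - if i = j then a else 0) x y =
      binaryForm k c x y - a * x ^ j * y ^ (k - j) := by
  simp only [binaryForm, sub_mul, sum_sub_distrib, ite_mul, zero_mul, sum_ite_eq',
    mem_range, Nat.lt_succ_of_le hj, if_true]

end Ring

theorem hasSum_binaryForm {ι : Type*} (k : ℕ) {c : ℕ → ι → ℝ} {v : ℕ → ℝ}
    (h : ∀ i ≤ k, HasSum (c i) (v i)) (x y : ℝ) :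
    HasSum (fun p => binaryForm k (fun i => c i p) x y) (binaryForm k v x y) :=
  hasSum_sum fun i hi => ((h i (Nat.lt_succ_iff.mp (mem_range.mp hi))).mul_right _).mul_right _

section Shuffle

variable {K : Type*} [Field K]

def zetaCoeff (k : ℕ) (m n : K) (i : ℕ) : K := 1 / (m ^ (i + 1) * n ^ (k + 1 - i))

theorem binaryForm_zetaCoeff_comm (k : ℕ) (x y m n : K) :
    binaryForm k (zetaCoeff k m n) x y = binaryForm k (zetaCoeff k n m) y x := by
  rw [binaryForm_swap, binaryForm, binaryForm]
  refine sum_congr rfl fun i hi => ?_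
  have hi : i ≤ k := Nat.lt_succ_iff.mp (mem_range.mp hi)
  rw [zetaCoeff, zetaCoeff, show k - i + 1 = k + 1 - i by omega,
    show k + 1 - (k - i) = i + 1 by omega, mul_comm (n ^ _)]

theorem mul_binaryForm_zetaCoeff_succ (k : ℕ) (x y : K) {m : K} (hm : m ≠ 0) (n : K) :
    m * binaryForm (k + 1) (zetaCoeff (k + 1) m n) x y =
      x * binaryForm k (zetaCoeff k m n) x y + y ^ (k + 1) / n ^ (k + 2) := by
  rw [binaryForm, sum_range_succ', binaryForm, mul_add, mul_sum, mul_sum]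
  congr 1
  · refine sum_congr rfl fun i _ => ?_
    simp only [zetaCoeff, Nat.add_sub_add_right]
    field_simp
    ring
  · simp only [zetaCoeff, zero_add, pow_one, pow_zero, mul_one, Nat.sub_zero]
    field_simp

theorem binaryForm_zetaCoeff_shuffle (k : ℕ) (x y : K) {m n : K} (hm : m ≠ 0) (hn : n ≠ 0)
    (hmn : m + n ≠ 0) :
    binaryForm k (zetaCoeff k m n) x y =
      binaryForm k (zetaCoeff k (m + n) n) (x + y) y +
        binaryForm k (zetaCoeff k (m + n) m) (x + y) x := by
  induction k with
  | zero =>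
    simp only [binaryForm, zetaCoeff, zero_add, sum_range_one]
    field_simp
    ring
  | succ k ih =>
    -- both sides satisfy `(m + n) F (k + 1) = (x + y) F k + x^(k+1)/m^(k+2) + y^(k+1)/n^(k+2)`
    refine mul_left_cancel₀ hmn ?_
    have h₁ := mul_binaryForm_zetaCoeff_succ k x y hm n
    have h₂ := mul_binaryForm_zetaCoeff_succ k y x hn m
    have h₃ := mul_binaryForm_zetaCoeff_succ k (x + y) y hmn n
    have h₄ := mul_binaryForm_zetaCoeff_succ k (x + y) x hmn m
    rw [← binaryForm_zetaCoeff_comm, ← binaryForm_zetaCoeff_comm k x y m n] at h₂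
    linear_combination h₁ + h₂ - h₃ - h₄ + (x + y) * ih

def regularizedCoeff (k : ℕ) (m n : K) (i : ℕ) : K :=
  zetaCoeff k m n i - (if i = 0 then zetaCoeff k (m + n) n 0 else 0) -
    (if i = k then zetaCoeff k (m + n) m 0 else 0)

theorem binaryForm_shuffle_regularized (k : ℕ) (x y : K) {m n : K}
    (hm : m ≠ 0) (hn : n ≠ 0) (hmn : m + n ≠ 0) :
    binaryForm k (fun i => if i = 0 then 0 else zetaCoeff k (m + n) n i) (x + y) y +
      binaryForm k (fun i => if i = 0 then 0 else zetaCoeff k (n + m) m i) (x + y) x =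
    binaryForm k (regularizedCoeff k m n) x y := by
  have h₁ := binaryForm_ite_zero k (zetaCoeff k (m + n) n) (x + y) y
  have h₂ := binaryForm_ite_zero k (zetaCoeff k (m + n) m) (x + y) x
  have hshuffle := binaryForm_zetaCoeff_shuffle k x y hm hn hmn
  unfold regularizedCoeff
  rw [binaryForm_sub_single _ _ _ le_rfl, binaryForm_sub_single _ _ _ (Nat.zero_le k), add_comm n m]
  simp only [pow_zero, mul_one, Nat.sub_zero, Nat.sub_self]
  linear_combination h₁ + h₂ - hshuffle

end Shuffle

section Reindexing

variable {α : Type*} [AddCommMonoid α] [TopologicalSpace α]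

theorem hasSum_ite_lt_iff (f : ℕ × ℕ → α) {a : α} :
    HasSum (fun p => if p.2 < p.1 then f p else 0) a ↔
      HasSum (fun q : ℕ × ℕ => f (q.1 + q.2 + 1, q.2)) a := by
  have hinj : Function.Injective fun q : ℕ × ℕ => (q.1 + q.2 + 1, q.2) := by
    rintro ⟨a, b⟩ ⟨c, d⟩ h
    simp only [Prod.mk.injEq] at h
    ext <;> omega
  rw [← hinj.hasSum_iff]
  · simp only [Function.comp_def, show ∀ q : ℕ × ℕ, q.2 < q.1 + q.2 + 1 by omega, if_true]
  · rintro ⟨i, j⟩ hp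
    exact if_neg fun (h : j < i) => hp ⟨(i - j - 1, j), Prod.ext (by dsimp only; omega) rfl⟩

theorem hasSum_ite_eq_iff (f : ℕ × ℕ → α) {a : α} :
    HasSum (fun p => if p.1 = p.2 then f p else 0) a ↔ HasSum (fun i => f (i, i)) a := by
  have hinj : Function.Injective fun i : ℕ => (i, i) := fun i j h => (Prod.mk.inj h).1
  rw [← hinj.hasSum_iff]
  · simp only [Function.comp_def, if_true]
  · rintro ⟨i, j⟩ hp
    exact if_neg fun (h : i = j) => hp ⟨i, by rw [h]⟩

end Reindexing

theorem HasSum.of_nonneg_of_rowSums {α β : Type*} {f g : α × β → ℝ} {r : α → ℝ} {a : ℝ}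
    (hg : HasSum g a) (hgr : ∀ b, HasSum (fun c => g (b, c)) (r b)) (hf : 0 ≤ f)
    (hfr : ∀ b, HasSum (fun c => f (b, c)) (r b)) : HasSum f a := by
  have hr : HasSum r a := hg.prod_fiberwise hgr
  have hfs : Summable f := (summable_prod_of_nonneg hf).mpr
    ⟨fun b => (hfr b).summable, by simpa only [(hfr _).tsum_eq] using hr.summable⟩
  exact (hfs.hasSum.prod_fiberwise hfr).unique hr ▸ hfs.hasSum

theorem hasSum_sub_succ_of_antitone {g : ℕ → ℝ} (hg : Antitone g) {l : ℝ}
    (hlim : Tendsto g atTop (𝓝 l)) : HasSum (fun n => g n - g (n + 1)) (g 0 - l) := by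
  rw [hasSum_iff_tendsto_nat_of_nonneg fun n => sub_nonneg.mpr (hg n.le_succ)]
  simp only [sum_range_sub']
  exact tendsto_const_nhds.sub hlim

theorem hasSum_one_div_sub_one_div_add (m : ℕ) :
    HasSum (fun j : ℕ => 1 / ((j : ℝ) + 1) - 1 / ((m : ℝ) + ((j : ℝ) + 1)))
      (∑ i ∈ range m, 1 / ((i : ℝ) + 1)) := by
  induction m with
  | zero => simp
  | succ m ih =>
    have hanti : Antitone fun j : ℕ => 1 / ((m : ℝ) + ((j : ℝ) + 1)) := fun i j hij =>
      one_div_le_one_div_of_le (by positivity) (by gcongr)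
    have hlim : Tendsto (fun j : ℕ => 1 / ((m : ℝ) + ((j : ℝ) + 1))) atTop (𝓝 0) :=
      tendsto_const_nhds.div_atTop (tendsto_atTop_add_const_left _ _
        (tendsto_atTop_add_const_right _ _ tendsto_natCast_atTop_atTop))
    convert ih.add (hasSum_sub_succ_of_antitone hanti hlim) using 1
    · funext j
      push_cast
      ring
    · rw [sum_range_succ]
      simp

theorem hasSum_rz {a : ℕ} (ha : 2 ≤ a) : HasSum (fun i : ℕ => 1 / ((i : ℝ) + 1) ^ a) (rz a) := by
  have hsum : Summable fun i : ℕ => 1 / ((i : ℝ) + 1) ^ a := by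
    simpa using (summable_nat_add_iff 1).mpr (Real.summable_one_div_nat_pow.mpr ha)
  convert hsum.hasSum using 1
  rw [rz, ← Nat.succ_injective.tsum_eq]
  · simp
  · rintro (_ | i) hm
    · simp at hm
    · exact ⟨i, rfl⟩

theorem sq_mul_sq_le_add_pow_mul_pow {m n : ℝ} (hm : 0 ≤ m) (hn : 1 ≤ n) {a b : ℕ} (ha : 2 ≤ a)
    (hab : 4 ≤ a + b) : m ^ 2 * n ^ 2 ≤ (m + n) ^ a * n ^ b := by
  obtain ⟨c, rfl⟩ := Nat.exists_eq_add_of_le ha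
  calc m ^ 2 * n ^ 2 ≤ m ^ 2 * n ^ (c + b) := by gcongr; omega
    _ = m ^ 2 * (n ^ c * n ^ b) := by rw [pow_add]
    _ ≤ (m + n) ^ 2 * ((m + n) ^ c * n ^ b) := by gcongr <;> linarith
    _ = (m + n) ^ (2 + c) * n ^ b := by ring

theorem hasSum_one_div_pow_mul_one_div_pow {a b : ℕ} (ha : 2 ≤ a) (hb : 2 ≤ b) :
    HasSum (fun p : ℕ × ℕ => 1 / ((p.1 : ℝ) + 1) ^ a * (1 / ((p.2 : ℝ) + 1) ^ b))
      (rz a * rz b) :=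
  (hasSum_rz ha).mul (hasSum_rz hb) ((hasSum_rz ha).summable.mul_of_nonneg
    (hasSum_rz hb).summable (fun _ => by positivity) (fun _ => by positivity))

theorem hasSum_dz {a b : ℕ} (ha : 2 ≤ a) (hab : 4 ≤ a + b) :
    HasSum (fun p : ℕ × ℕ => 1 / (((p.1 : ℝ) + 1 + ((p.2 : ℝ) + 1)) ^ a * ((p.2 : ℝ) + 1) ^ b))
      (dz a b) := by
  have hsum : Summable fun p : ℕ × ℕ =>
      1 / (((p.1 : ℝ) + 1 + ((p.2 : ℝ) + 1)) ^ a * ((p.2 : ℝ) + 1) ^ b) := by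
    refine (hasSum_one_div_pow_mul_one_div_pow le_rfl le_rfl).summable.of_nonneg_of_le
      (fun _ => by positivity) fun p => ?_
    rw [one_div_mul_one_div]
    exact one_div_le_one_div_of_le (by positivity)
      (sq_mul_sq_le_add_pow_mul_pow (by positivity) (by simp) ha hab)
  convert hsum.hasSum using 1
  have hinj : Function.Injective fun q : ℕ × ℕ => (q.1 + q.2 + 2, q.2 + 1) := by
    rintro ⟨a, b⟩ ⟨c, d⟩ h
    simp only [Prod.mk.injEq] at h
    ext <;> omega
  rw [dz, ← hinj.tsum_eq]
  · refine tsum_congr fun q => ?_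
    rw [if_pos (by omega)]
    push_cast
    ring_nf
  · rintro ⟨i, j⟩ hp
    have h : j < i ∧ 0 < j := by by_contra h; simp [h] at hp
    exact ⟨(i - j - 1, j - 1), by simp only [Prod.mk.injEq]; omega⟩

theorem rz_mul_rz {a b : ℕ} (ha : 2 ≤ a) (hb : 2 ≤ b) :
    rz a * rz b = dz a b + dz b a + rz (a + b) := by
  set f : ℕ × ℕ → ℝ := fun p => 1 / ((p.1 : ℝ) + 1) ^ a * (1 / ((p.2 : ℝ) + 1) ^ b) with hf
  have hlt : HasSum (fun p => if p.2 < p.1 then f p else 0) (dz a b) := by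
    refine (hasSum_ite_lt_iff f).mpr ?_
    convert hasSum_dz (b := b) ha (by omega) using 2 with q
    simp only [hf]
    push_cast
    ring
  have hgt : HasSum (fun p => if p.1 < p.2 then f p else 0) (dz b a) := by
    rw [← (Equiv.prodComm ℕ ℕ).hasSum_iff]
    refine (hasSum_ite_lt_iff (f ∘ Prod.swap)).mpr ?_
    convert hasSum_dz (b := a) hb (by omega) using 2 with q
    simp only [hf, Function.comp_apply, Prod.swap_prod_mk]
    push_cast
    ring
  have hdiag : HasSum (fun p => if p.1 = p.2 then f p else 0) (rz (a + b)) := by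
    refine (hasSum_ite_eq_iff f).mpr ?_
    convert hasSum_rz (a := a + b) (by omega) using 2 with i
    simp only [hf]
    rw [pow_add, one_div_mul_one_div]
  refine (hasSum_one_div_pow_mul_one_div_pow ha hb).unique ?_
  convert (hlt.add hgt).add hdiag using 2 with p
  split_ifs <;> first | omega | simp [hf]

theorem hasSum_one_div_pow_mul_one_div_sub_one_div_add {k : ℕ} (hk : 2 ≤ k) :
    HasSum (fun p : ℕ × ℕ => 1 / ((p.1 : ℝ) + 1) ^ (k + 1) *
      (1 / ((p.2 : ℝ) + 1) - 1 / ((p.1 : ℝ) + 1 + ((p.2 : ℝ) + 1))))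
      (dz (k + 1) 1 + rz (k + 2)) := by
  set f : ℕ × ℕ → ℝ := fun p => 1 / ((p.1 : ℝ) + 1) ^ (k + 1) * (1 / ((p.2 : ℝ) + 1)) with hf
  have hlt : HasSum (fun p => if p.2 < p.1 then f p else 0) (dz (k + 1) 1) := by
    refine (hasSum_ite_lt_iff f).mpr ?_
    convert hasSum_dz (a := k + 1) (b := 1) (by omega) (by omega) using 2 with q
    simp only [hf]
    push_cast
    rw [one_div_mul_one_div, pow_one]
    ring_nf
  have hdiag : HasSum (fun p => if p.1 = p.2 then f p else 0) (rz (k + 2)) := by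
    refine (hasSum_ite_eq_iff f).mpr ?_
    convert hasSum_rz (a := k + 2) (by omega) using 2 with i
    simp only [hf]
    rw [one_div_mul_one_div, ← pow_succ]
  have hle : HasSum (fun p => if p.2 ≤ p.1 then f p else 0) (dz (k + 1) 1 + rz (k + 2)) := by
    convert hlt.add hdiag using 2 with p
    split_ifs <;> first | omega | simp [hf]
  refine hle.of_nonneg_of_rowSums
    (r := fun i : ℕ => 1 / ((i : ℝ) + 1) ^ (k + 1) * ∑ j ∈ range (i + 1), 1 / ((j : ℝ) + 1))
    (fun i => ?_) (fun p => ?_) (fun i => ?_)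
  · rw [mul_sum]
    convert hasSum_sum_of_ne_finset_zero (s := range (i + 1)) (L := .unconditional ℕ)
      (fun j hj => ?_) using 1
    · refine sum_congr rfl fun j hj => ?_
      rw [if_pos (Nat.lt_succ_iff.mp (mem_range.mp hj))]
    · exact if_neg (by simpa [Nat.lt_succ_iff] using hj)
  · refine mul_nonneg (by positivity) (sub_nonneg.mpr (one_div_le_one_div_of_le (by positivity) ?_))
    linarith [(by positivity : (0 : ℝ) ≤ p.1)]
  · have h := (hasSum_one_div_sub_one_div_add (i + 1)).mul_left (1 / ((i : ℝ) + 1) ^ (k + 1))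
    push_cast at h
    exact h

noncomputable def doubleZetaCoeff (k i : ℕ) : ℝ := if i = 0 then 0 else dz (i + 1) (k + 1 - i)

theorem D_eq_binaryForm (k : ℕ) (x y : ℝ) :
    D (k + 2) x y = binaryForm k (doubleZetaCoeff k) x y := by
  rw [D, binaryForm, sum_range_succ', show k + 2 - 1 = k + 1 by omega,
    ← Ico_add_one_right_eq_Icc, sum_Ico_eq_sum_range, show k + 1 + 1 - 2 = k by omega]
  simp only [doubleZetaCoeff, if_true, zero_mul, add_zero, Nat.succ_ne_zero, if_false]
  refine sum_congr rfl fun i hi => ?_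
  have hi : i < k := mem_range.mp hi
  rw [show 2 + i - 1 = i + 1 by omega, show k + 2 - (2 + i) - 1 = k - (i + 1) by omega,
    show k + 2 - (2 + i) = k + 1 - (i + 1) by omega, show 2 + i = i + 1 + 1 by omega]
  ring

theorem hasSum_D {k : ℕ} (hk : 2 ≤ k) (x y : ℝ) :
    HasSum (fun p : ℕ × ℕ => binaryForm k (fun i => if i = 0 then 0 else
      zetaCoeff k ((p.1 : ℝ) + 1 + ((p.2 : ℝ) + 1)) ((p.2 : ℝ) + 1) i) x y) (D (k + 2) x y) := by
  rw [D_eq_binaryForm]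
  refine hasSum_binaryForm k (fun i hi => ?_) x y
  by_cases h : i = 0
  · simp only [h, doubleZetaCoeff, if_true]
    exact hasSum_zero
  · simp only [h, doubleZetaCoeff, if_false]
    exact hasSum_dz (by omega) (by omega)

theorem hasSum_regularizedCoeff {k : ℕ} (hk : 2 ≤ k) {i : ℕ} (hi : i ≤ k) :
    HasSum (fun p : ℕ × ℕ => regularizedCoeff k ((p.1 : ℝ) + 1) ((p.2 : ℝ) + 1) i)
      (doubleZetaCoeff k i + doubleZetaCoeff k (k - i) + rz (k + 2)) := by
  rcases Nat.eq_zero_or_pos i with rfl | hi₀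
  · convert (Equiv.prodComm ℕ ℕ).hasSum_iff.mpr
      (hasSum_one_div_pow_mul_one_div_sub_one_div_add hk) using 1
    · funext p
      simp only [regularizedCoeff, zetaCoeff, if_true, if_neg (by omega : 0 ≠ k),
        Function.comp_apply, Equiv.prodComm_apply, Prod.fst_swap, Prod.snd_swap, zero_add,
        pow_one, Nat.sub_zero, sub_zero]
      field_simp
      ring
    · simp [doubleZetaCoeff, if_neg (by omega : k ≠ 0)]
  rcases eq_or_lt_of_le hi with rfl | hik
  · convert hasSum_one_div_pow_mul_one_div_sub_one_div_add hk using 1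
    · funext p
      simp only [regularizedCoeff, zetaCoeff, if_true, if_neg (by omega : i ≠ 0), zero_add,
        pow_one, Nat.sub_zero, sub_zero, Nat.add_sub_cancel_left]
      field_simp
    · simp [doubleZetaCoeff, if_neg (by omega : i ≠ 0)]
  · have h := hasSum_one_div_pow_mul_one_div_pow (a := i + 1) (b := k + 1 - i) (by omega) (by omega)
    rw [rz_mul_rz (by omega) (by omega), show i + 1 + (k + 1 - i) = k + 2 by omega] at h
    convert h using 1
    · funext p
      simp only [regularizedCoeff, zetaCoeff, if_neg (by omega : i ≠ 0), if_neg hik.ne,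
        one_div_mul_one_div, sub_zero]
    · simp only [doubleZetaCoeff, if_neg (by omega : i ≠ 0), if_neg (by omega : k - i ≠ 0)]
      rw [show k - i + 1 = k + 1 - i by omega, show k + 1 - (k - i) = i + 1 by omega]

theorem parameterized_sum_formula_double (l : ℕ) (hl : 4 ≤ l) (x y : ℝ) :
    D l (x + y) y + D l (x + y) x =
      D l x y + D l y x + (∑ j ∈ Finset.range (l - 1), x ^ j * y ^ (l - 2 - j)) * rz l := by
  obtain ⟨k, rfl⟩ : ∃ k, l = k + 2 := ⟨l - 2, by omega⟩
  have hk : 2 ≤ k := by omega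
  have hshuffle : HasSum (fun p : ℕ × ℕ =>
      binaryForm k (regularizedCoeff k ((p.1 : ℝ) + 1) ((p.2 : ℝ) + 1)) x y)
      (D (k + 2) (x + y) y + D (k + 2) (x + y) x) := by
    convert (hasSum_D hk (x + y) y).add
      ((Equiv.prodComm ℕ ℕ).hasSum_iff.mpr (hasSum_D hk (x + y) x)) using 1
    funext p
    exact (binaryForm_shuffle_regularized k x y (by positivity) (by positivity)
      (by positivity)).symm
  have hstuffle := hasSum_binaryForm k (fun i hi => hasSum_regularizedCoeff hk hi) x y
  rw [hshuffle.unique hstuffle, binaryForm_add, binaryForm_add, D_eq_binaryForm, D_eq_binaryForm,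
    ← binaryForm_swap, binaryForm_const, show k + 2 - 1 = k + 1 by omega, Nat.add_sub_cancel]
end
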